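/- arXiv:quant-ph/0404046 — 3 statements merged into one kernel-verified Lean document; each statement's English description precedes it below -/
import Mathlib

section
/- Let y ∈ V^n be a probability vector with positive components and c a vector with positive non-increasing components, and let [c]_{g_u(y)} = {c^1, …, c^m} be the decomposition of c according to g_u(y). Then T(y,c) = ⋂_{i=1}^m T(y,c^i); equivalently, for x ∈ V^n, x⊗c ≺ y⊗c if and only if x⊗c^i ≺ y⊗c^i for every 1 ≤ i ≤ m. -/
noncomputable section

/-- `eSum x l` : the sum of the `l` largest components of `x`. -/
def eSum {n : ℕ} (x : Fin n → ℝ) (l : ℕ) : ℝ :=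
  sSup {r | ∃ s : Finset (Fin n), s.card = l ∧ r = ∑ i ∈ s, x i}

/-- `ESum x l` : the sum of the `l` smallest components of `x`. -/
def ESum {n : ℕ} (x : Fin n → ℝ) (l : ℕ) : ℝ :=
  sInf {r | ∃ s : Finset (Fin n), s.card = l ∧ r = ∑ i ∈ s, x i}

/-- Majorization `x ≺ y` (for vectors with equal total sum):
`e_l(x) ≤ e_l(y)` for all `1 ≤ l ≤ n`. -/
def Maj {n : ℕ} (x y : Fin n → ℝ) : Prop :=
  (∑ i, x i) = (∑ i, y i) ∧ ∀ l : ℕ, 1 ≤ l → l ≤ n → eSum x l ≤ eSum y l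

/-- Strict majorization `x ◁ y`: equal total sums and `e_l(x) < e_l(y)` for all
`1 ≤ l ≤ n - 1`. -/
def SMaj {n : ℕ} (x y : Fin n → ℝ) : Prop :=
  (∑ i, x i) = (∑ i, y i) ∧ ∀ l : ℕ, 1 ≤ l → l + 1 ≤ n → eSum x l < eSum y l

/-- Super-majorization `x ≺ʷ y` : `E_l(x) ≥ E_l(y)` for all `1 ≤ l ≤ n`. -/
def SupMaj {n : ℕ} (x y : Fin n → ℝ) : Prop :=
  ∀ l : ℕ, 1 ≤ l → l ≤ n → ESum y l ≤ ESum x l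

/-- Strict super-majorization `x ◁ʷ y` : `E_l(x) > E_l(y)` for all `1 ≤ l ≤ n`. -/
def SSupMaj {n : ℕ} (x y : Fin n → ℝ) : Prop :=
  ∀ l : ℕ, 1 ≤ l → l ≤ n → ESum y l < ESum x l

/-- Tensor product of two vectors: the vector of all pairwise products. -/
def tensor {m k : ℕ} (x : Fin m → ℝ) (c : Fin k → ℝ) : Fin (m * k) → ℝ :=
  fun i => x (finProdFinEquiv.symm i).1 * c (finProdFinEquiv.symm i).2

/-- `k`-fold tensor power of a vector. -/
def tpow {n : ℕ} (x : Fin n → ℝ) (k : ℕ) : Fin (n ^ k) → ℝ :=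
  fun i => ∏ j : Fin k, x (finFunctionFinEquiv.symm i j)

/-- `V^n` : probability vectors with components in non-increasing order. -/
def Vn (n : ℕ) : Set (Fin n → ℝ) :=
  {x | (∀ i, 0 ≤ x i) ∧ (∑ i, x i) = 1 ∧ Antitone x}

/-- `S(y)` : members of `V^n` majorized by `y`. -/
def Sset {n : ℕ} (y : Fin n → ℝ) : Set (Fin n → ℝ) :=
  {x ∈ Vn n | Maj x y}

/-- `T(y,c)` : members of `V^n` with `x ⊗ c ≺ y ⊗ c`. -/
def Tcat {n k : ℕ} (y : Fin n → ℝ) (c : Fin k → ℝ) : Set (Fin n → ℝ) :=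
  {x ∈ Vn n | Maj (tensor x c) (tensor y c)}

/-- Local uniformity `l_u(c)` : the minimum of the consecutive ratios `c_{i+1}/c_i`. -/
def lu {k : ℕ} (c : Fin k → ℝ) : ℝ :=
  sInf {r | ∃ i : ℕ, ∃ h : i + 1 < k, r = c ⟨i + 1, h⟩ / c ⟨i, Nat.lt_of_succ_lt h⟩}

/-- Global uniformity `g_u(c) = c_k / c_1` (smallest over largest component of a
non-increasingly ordered vector). -/
def gu {k : ℕ} (c : Fin k → ℝ) : ℝ :=
  if h : 0 < k then c ⟨k - 1, Nat.sub_lt h Nat.one_pos⟩ / c ⟨0, h⟩ else 1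

/-- Largest component. -/
def maxc {n : ℕ} (x : Fin n → ℝ) : ℝ := sSup (Set.range x)

/-- Smallest component. -/
def minc {n : ℕ} (x : Fin n → ℝ) : ℝ := sInf (Set.range x)

/-- `c'` is a (contiguous) segment of `c`. -/
def IsSegment {j k : ℕ} (c' : Fin j → ℝ) (c : Fin k → ℝ) : Prop :=
  ∃ (i : ℕ) (_h : i + j ≤ k), ∀ t : Fin j, c' t = c ⟨i + t, by have := t.isLt; omega⟩

/-- The first `d` components of a vector. -/
def take {n : ℕ} (x : Fin n → ℝ) (d : ℕ) (h : d ≤ n) : Fin d → ℝ :=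
  fun i => x ⟨i, Nat.lt_of_lt_of_le i.isLt h⟩

/-- The components of a vector after the first `d` ones. -/
def drop {n : ℕ} (x : Fin n → ℝ) (d : ℕ) : Fin (n - d) → ℝ :=
  fun i => x ⟨d + i, by have := i.isLt; omega⟩

/-- The segment `(c_i, …, c_j)` of `c` (`0`-based indices). -/
def seg {k : ℕ} (c : Fin k → ℝ) (i j : ℕ) (hij : i ≤ j) (hj : j < k) :
    Fin (j - i + 1) → ℝ :=
  fun t => c ⟨i + t, by have := t.isLt; omega⟩

/-- `(c_i, …, c_j)` is a block of the decomposition `[c]_α` of the (positive,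
non-increasingly ordered) vector `c` according to `α`: ratios within the block
exceed `α`, and the ratios at the two boundaries of the block are `≤ α`
(or the block touches an end of `c`). -/
def IsBlock {k : ℕ} (α : ℝ) (c : Fin k → ℝ) (i j : ℕ) : Prop :=
  ∃ (hij : i ≤ j) (hj : j < k),
    (i = 0 ∨ c ⟨i, by omega⟩ / c ⟨i - 1, by omega⟩ ≤ α) ∧
    (j = k - 1 ∨ ∃ hj1 : j + 1 < k, c ⟨j + 1, hj1⟩ / c ⟨j, hj⟩ ≤ α) ∧
    (∀ (t : ℕ) (ht1 : i ≤ t) (ht2 : t < j), α < c ⟨t + 1, by omega⟩ / c ⟨t, by omega⟩)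

/-- `T_k(y)` : states transformable to `y` with a `k`-dimensional catalyst. -/
def Tk {n : ℕ} (k : ℕ) (y : Fin n → ℝ) : Set (Fin n → ℝ) :=
  {x ∈ Vn n | ∃ c : Fin k → ℝ, (∀ i, 0 < c i) ∧ (∑ i, c i) = 1 ∧ Antitone c ∧
    Maj (tensor x c) (tensor y c)}

/-- `M_k(y)` : states `x` with `x^{⊗k} ≺ y^{⊗k}`. -/
def Mk {n : ℕ} (k : ℕ) (y : Fin n → ℝ) : Set (Fin n → ℝ) :=
  {x ∈ Vn n | Maj (tpow x k) (tpow y k)}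

/-- `T(y)` : states transformable to `y` with some catalyst. -/
def Tinf {n : ℕ} (y : Fin n → ℝ) : Set (Fin n → ℝ) :=
  {x ∈ Vn n | ∃ (k : ℕ) (c : Fin k → ℝ), 0 < k ∧ (∀ i, 0 < c i) ∧ (∑ i, c i) = 1 ∧
    Antitone c ∧ Maj (tensor x c) (tensor y c)}

/-- `M(y)` : states `x` with `x^{⊗k} ≺ y^{⊗k}` for some `k ≥ 1`. -/
def Minf {n : ℕ} (y : Fin n → ℝ) : Set (Fin n → ℝ) :=
  {x ∈ Vn n | ∃ k : ℕ, 1 ≤ k ∧ Maj (tpow x k) (tpow y k)}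

/-- `S^λ(y)` : states `x` with `x ≺ʷ λ y`. -/
def Slam {n : ℕ} (lam : ℝ) (y : Fin n → ℝ) : Set (Fin n → ℝ) :=
  {x ∈ Vn n | SupMaj x (fun i => lam * y i)}

/-- `T^λ(y,c)` : states `x` with `x ⊗ c ≺ʷ λ (y ⊗ c)`. -/
def Tlamc {n k : ℕ} (lam : ℝ) (y : Fin n → ℝ) (c : Fin k → ℝ) : Set (Fin n → ℝ) :=
  {x ∈ Vn n | SupMaj (tensor x c) (fun i => lam * tensor y c i)}

/-- `T_k^λ(y)`. -/
def Tklam {n : ℕ} (k : ℕ) (lam : ℝ) (y : Fin n → ℝ) : Set (Fin n → ℝ) :=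
  {x ∈ Vn n | ∃ c : Fin k → ℝ, (∀ i, 0 < c i) ∧ (∑ i, c i) = 1 ∧ Antitone c ∧
    SupMaj (tensor x c) (fun i => lam * tensor y c i)}

/-- `M_k^λ(y)`. -/
def Mklam {n : ℕ} (k : ℕ) (lam : ℝ) (y : Fin n → ℝ) : Set (Fin n → ℝ) :=
  {x ∈ Vn n | SupMaj (tpow x k) (fun i => lam ^ k * tpow y k i)}

/-- `T^λ(y)`. -/
def Tlaminf {n : ℕ} (lam : ℝ) (y : Fin n → ℝ) : Set (Fin n → ℝ) :=
  {x ∈ Vn n | ∃ (k : ℕ) (c : Fin k → ℝ), 0 < k ∧ (∀ i, 0 < c i) ∧ (∑ i, c i) = 1 ∧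
    Antitone c ∧ SupMaj (tensor x c) (fun i => lam * tensor y c i)}

/-- `M^λ(y)`. -/
def Mlaminf {n : ℕ} (lam : ℝ) (y : Fin n → ℝ) : Set (Fin n → ℝ) :=
  {x ∈ Vn n | ∃ k : ℕ, 1 ≤ k ∧ SupMaj (tpow x k) (fun i => lam ^ k * tpow y k i)}

/-- `K_d(y)` : concatenations `x = x' ⊕ x''` with `x' ◁ y'` and `x'' ◁ y''`,
where `y'` is the first-`d` part of `y` and `y''` the rest. -/
def Kd {n : ℕ} (y : Fin n → ℝ) (d : ℕ) (h : d ≤ n) : Set (Fin n → ℝ) :=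
  {x ∈ Vn n | SMaj (take x d h) (take y d h) ∧ SMaj (drop x d) (drop y d)}

/-- `y(d)` : first `d` components equal to `e_d(y)/d`, the last `n-d` equal to
`(1 - e_d(y))/(n-d)`. -/
def yvec {n : ℕ} (y : Fin n → ℝ) (d : ℕ) : Fin n → ℝ :=
  fun i => if (i : ℕ) < d then eSum y d / d else (1 - eSum y d) / (n - d)

/-- `K_d^λ(y)` : states `x ∈ S^λ(y)` with `E_l(x) = λ E_l(y)` iff `l = n - d`. -/
def Kdlam {n : ℕ} (lam : ℝ) (y : Fin n → ℝ) (d : ℕ) : Set (Fin n → ℝ) :=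
  {x ∈ Vn n | SupMaj x (fun i => lam * y i) ∧
    ∀ l : ℕ, 1 ≤ l → l ≤ n → (ESum x l = lam * ESum y l ↔ l = n - d)}

/-!
Let `t` be a break of `[c]_{g_u(y)}`, i.e. `c_{t+1} / c_t ≤ y_n / y_1`. Then every entry
`y_p c_b` with `b > t` is at most every entry `y_q c_a` with `a ≤ t`, so `y ⊗ c` is the
concatenation of a head (catalyst indices `≤ t`) whose entries all dominate those of the tail.
For such a vector the partial sums `e_l` are those of the head for `l` up to its length, and the
head's total plus those of the tail beyond it. Since `∑ x = ∑ y`, the heads of `x ⊗ c` and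
`y ⊗ c` have equal sums, and comparing `e_l` on both sides shows that `x ⊗ c ≺ y ⊗ c` splits into
majorization of the heads and of the tails. Conversely majorization of parts always glues to
majorization of their concatenation. Cutting `c` at all breaks gives the theorem.
-/

section Majorization

variable {ι κ : Type*}

def topSum (x : ι → ℝ) (l : ℕ) : ℝ :=
  sSup {r | ∃ s : Finset ι, s.card = l ∧ r = ∑ i ∈ s, x i}

def IsMajorized [Fintype ι] (x y : ι → ℝ) : Prop :=
  ∑ i, x i = ∑ i, y i ∧ ∀ l ≤ Fintype.card ι, topSum x l ≤ topSum y l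

lemma topSum_comp_equiv (e : κ ≃ ι) (x : ι → ℝ) (l : ℕ) : topSum (x ∘ e) l = topSum x l := by
  unfold topSum
  congr 1
  ext r
  constructor
  · rintro ⟨s, hs, rfl⟩
    exact ⟨s.map e.toEmbedding, by simp [hs], by simp⟩
  · rintro ⟨s, hs, rfl⟩
    exact ⟨s.map e.symm.toEmbedding, by simp [hs], by simp [Finset.sum_map]⟩

lemma sum_le_sum_of_card_eq {u : ι → ℝ} {v : κ → ℝ} (hvu : ∀ i j, v j ≤ u i)
    {s : Finset κ} {t : Finset ι} (hst : s.card = t.card) :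
    ∑ j ∈ s, v j ≤ ∑ i ∈ t, u i := by
  rcases s.eq_empty_or_nonempty with rfl | hs
  · simp [Finset.card_eq_zero.mp hst.symm]
  obtain ⟨j, -, hj⟩ := s.exists_max_image v hs
  calc ∑ j ∈ s, v j ≤ s.card • v j := Finset.sum_le_card_nsmul _ _ _ hj
    _ = t.card • v j := by rw [hst]
    _ ≤ ∑ i ∈ t, u i := Finset.card_nsmul_le_sum _ _ _ fun i _ => hvu i j

variable [Fintype ι] [Fintype κ]

lemma finite_setOf_sum_card_eq (x : ι → ℝ) (l : ℕ) :
    {r : ℝ | ∃ s : Finset ι, s.card = l ∧ r = ∑ i ∈ s, x i}.Finite :=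
  (Set.finite_range fun s : Finset ι => ∑ i ∈ s, x i).subset <| by
    rintro r ⟨s, -, rfl⟩
    exact ⟨s, rfl⟩

lemma sum_le_topSum (x : ι → ℝ) {l : ℕ} {s : Finset ι} (hs : s.card = l) :
    ∑ i ∈ s, x i ≤ topSum x l :=
  le_csSup (finite_setOf_sum_card_eq x l).bddAbove ⟨s, hs, rfl⟩

lemma exists_topSum_eq (x : ι → ℝ) {l : ℕ} (hl : l ≤ Fintype.card ι) :
    ∃ s : Finset ι, s.card = l ∧ topSum x l = ∑ i ∈ s, x i := by
  obtain ⟨s, -, hs⟩ :=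
    Finset.exists_subset_card_eq (s := (Finset.univ : Finset ι)) (by simpa using hl)
  exact Set.Nonempty.csSup_mem (s := {r | ∃ s : Finset ι, s.card = l ∧ r = ∑ i ∈ s, x i})
    ⟨_, s, hs, rfl⟩ (finite_setOf_sum_card_eq x l)

lemma topSum_le {x : ι → ℝ} {l : ℕ} (hl : l ≤ Fintype.card ι) {r : ℝ}
    (h : ∀ s : Finset ι, s.card = l → ∑ i ∈ s, x i ≤ r) : topSum x l ≤ r := by
  obtain ⟨s, hs, he⟩ := exists_topSum_eq x hl
  exact he ▸ h s hs

@[simp]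
lemma topSum_zero (x : ι → ℝ) : topSum x 0 = 0 :=
  le_antisymm (topSum_le (Nat.zero_le _) fun s hs => by simp [Finset.card_eq_zero.mp hs])
    (by simpa using sum_le_topSum x (s := ∅) rfl)

lemma topSum_card (x : ι → ℝ) : topSum x (Fintype.card ι) = ∑ i, x i :=
  le_antisymm (topSum_le le_rfl fun s hs => by rw [Finset.eq_univ_of_card s hs])
    (sum_le_topSum x Finset.card_univ)

lemma add_topSum_le_topSum_sumElim (u : ι → ℝ) (v : κ → ℝ) {a b : ℕ}
    (ha : a ≤ Fintype.card ι) (hb : b ≤ Fintype.card κ) :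
    topSum u a + topSum v b ≤ topSum (Sum.elim u v) (a + b) := by
  obtain ⟨s, hs, hsu⟩ := exists_topSum_eq u ha
  obtain ⟨t, ht, htv⟩ := exists_topSum_eq v hb
  rw [hsu, htv, ← Finset.sum_sumElim]
  exact sum_le_topSum _ (by rw [Finset.card_disjSum, hs, ht])

lemma topSum_sumElim_le_of_le_card {u : ι → ℝ} {v : κ → ℝ} (hvu : ∀ i j, v j ≤ u i) {l : ℕ}
    (hl : l ≤ Fintype.card ι) : topSum (Sum.elim u v) l ≤ topSum u l := by
  classical
  refine topSum_le (by simp; omega) fun s hs => ?_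
  have hcard : s.toLeft.card + s.toRight.card = l := by
    rw [Finset.card_toLeft_add_card_toRight, hs]
  obtain ⟨t, hts, ht⟩ := Finset.exists_subset_card_eq (s := s.toLeftᶜ) (n := s.toRight.card)
    (by rw [Finset.card_compl]; omega)
  have hdisj : Disjoint s.toLeft t := disjoint_compl_right.mono_right hts
  calc ∑ i ∈ s, Sum.elim u v i = ∑ i ∈ s.toLeft, u i + ∑ j ∈ s.toRight, v j :=
        Finset.sum_sum_eq_sum_toLeft_add_sum_toRight ..
    _ ≤ ∑ i ∈ s.toLeft, u i + ∑ i ∈ t, u i := by gcongr; exact sum_le_sum_of_card_eq hvu ht.symm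
    _ = ∑ i ∈ s.toLeft ∪ t, u i := (Finset.sum_union hdisj).symm
    _ ≤ topSum u l := sum_le_topSum u (by rw [Finset.card_union_of_disjoint hdisj]; omega)

lemma topSum_sumElim_card_add_le {u : ι → ℝ} {v : κ → ℝ} (hvu : ∀ i j, v j ≤ u i) {l : ℕ}
    (hl : l ≤ Fintype.card κ) :
    topSum (Sum.elim u v) (Fintype.card ι + l) ≤ ∑ i, u i + topSum v l := by
  classical
  refine topSum_le (by simp; omega) fun s hs => ?_
  have hcard : s.toLeft.card + s.toRight.card = Fintype.card ι + l := by
    rw [Finset.card_toLeft_add_card_toRight, hs]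
  have hleft : s.toLeft.card ≤ Fintype.card ι := Finset.card_le_univ _
  obtain ⟨t, hts, ht⟩ := Finset.exists_subset_card_eq (s := s.toRight) (n := l) (by omega)
  have hrest : ∑ j ∈ s.toRight \ t, v j ≤ ∑ i ∈ s.toLeftᶜ, u i :=
    sum_le_sum_of_card_eq hvu (by rw [Finset.card_sdiff_of_subset hts, Finset.card_compl]; omega)
  calc ∑ i ∈ s, Sum.elim u v i
      = ∑ i ∈ s.toLeft, u i + (∑ j ∈ s.toRight \ t, v j + ∑ j ∈ t, v j) := by
        simp only [Finset.sum_sum_eq_sum_toLeft_add_sum_toRight, Sum.elim_inl, Sum.elim_inr]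
        rw [Finset.sum_sdiff hts]
    _ ≤ ∑ i ∈ s.toLeft, u i + (∑ i ∈ s.toLeftᶜ, u i + topSum v l) := by
        gcongr
        exact sum_le_topSum v ht
    _ = ∑ i, u i + topSum v l := by rw [← add_assoc, Finset.sum_add_sum_compl]

lemma maj_iff_isMajorized {n : ℕ} (x y : Fin n → ℝ) : Maj x y ↔ IsMajorized x y := by
  refine and_congr_right fun _ => ⟨fun h l hl => ?_, fun h l _ hl => h l (by simpa using hl)⟩
  rcases Nat.eq_zero_or_pos l with rfl | hl0
  · simp
  · exact h l hl0 (by simpa using hl)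

lemma isMajorized_comp_equiv_iff (e : κ ≃ ι) {x y : ι → ℝ} :
    IsMajorized (x ∘ e) (y ∘ e) ↔ IsMajorized x y := by
  simp only [IsMajorized, topSum_comp_equiv, Function.comp_apply, Fintype.card_congr e,
    e.sum_comp]

lemma IsMajorized.sumElim {u u' : ι → ℝ} {v v' : κ → ℝ} (hu : IsMajorized u u')
    (hv : IsMajorized v v') : IsMajorized (Sum.elim u v) (Sum.elim u' v') := by
  refine ⟨by simp [hu.1, hv.1], fun l hl => topSum_le hl fun s hs => ?_⟩
  have ha : s.toLeft.card ≤ Fintype.card ι := Finset.card_le_univ _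
  have hb : s.toRight.card ≤ Fintype.card κ := Finset.card_le_univ _
  calc ∑ i ∈ s, Sum.elim u v i = ∑ i ∈ s.toLeft, u i + ∑ j ∈ s.toRight, v j :=
        Finset.sum_sum_eq_sum_toLeft_add_sum_toRight ..
    _ ≤ topSum u s.toLeft.card + topSum v s.toRight.card :=
        add_le_add (sum_le_topSum u rfl) (sum_le_topSum v rfl)
    _ ≤ topSum u' s.toLeft.card + topSum v' s.toRight.card := add_le_add (hu.2 _ ha) (hv.2 _ hb)
    _ ≤ topSum (Sum.elim u' v') (s.toLeft.card + s.toRight.card) :=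
        add_topSum_le_topSum_sumElim u' v' ha hb
    _ = topSum (Sum.elim u' v') l := by rw [Finset.card_toLeft_add_card_toRight, hs]

lemma IsMajorized.of_sumElim {u u' : ι → ℝ} {v v' : κ → ℝ} (hsum : ∑ i, u i = ∑ i, u' i)
    (hvu : ∀ i j, v' j ≤ u' i) (h : IsMajorized (Sum.elim u v) (Sum.elim u' v')) :
    IsMajorized u u' ∧ IsMajorized v v' := by
  have hsum' : ∑ j, v j = ∑ j, v' j := by
    have := h.1
    simp only [Fintype.sum_sum_type, Sum.elim_inl, Sum.elim_inr, hsum] at this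
    linarith
  refine ⟨⟨hsum, fun l hl => ?_⟩, ⟨hsum', fun l hl => ?_⟩⟩
  · calc topSum u l = topSum u l + topSum v 0 := by simp
      _ ≤ topSum (Sum.elim u v) (l + 0) := add_topSum_le_topSum_sumElim u v hl (Nat.zero_le _)
      _ ≤ topSum (Sum.elim u' v') l := h.2 _ (by simp; omega)
      _ ≤ topSum u' l := topSum_sumElim_le_of_le_card hvu hl
  · have hlow := add_topSum_le_topSum_sumElim u v le_rfl hl
    rw [topSum_card] at hlow
    linarith [h.2 (Fintype.card ι + l) (by simp; omega), topSum_sumElim_card_add_le hvu hl]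

end Majorization

section TensorMajorizedOn

variable {ι κ : Type*} [Fintype ι]

/-- `x ⊗ c_S ≺ y ⊗ c_S` for the subvector `c_S` of `c` on the catalyst indices `S`, indexed by
`ι × S`. -/
def TensorMajorizedOn (x y : ι → ℝ) (c : κ → ℝ) (S : Finset κ) : Prop :=
  IsMajorized (fun p : ι × S => x p.1 * c p.2) (fun p : ι × S => y p.1 * c p.2)

lemma sum_mul_apply_coe (x : ι → ℝ) (c : κ → ℝ) (S : Finset κ) :
    ∑ p : ι × S, x p.1 * c p.2 = (∑ i, x i) * ∑ a ∈ S, c a := by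
  rw [← Finset.sum_coe_sort S c, Finset.sum_mul_sum, Fintype.sum_prod_type]

variable [DecidableEq κ] {x y : ι → ℝ} {c : κ → ℝ} {A B : Finset κ}

lemma tensorMajorizedOn_union_iff (hAB : Disjoint A B) :
    TensorMajorizedOn x y c (A ∪ B) ↔
      IsMajorized (Sum.elim (fun p : ι × A => x p.1 * c p.2) fun p : ι × B => x p.1 * c p.2)
        (Sum.elim (fun p : ι × A => y p.1 * c p.2) fun p : ι × B => y p.1 * c p.2) := by
  let e : ι × ↥(A ∪ B) ≃ (ι × A) ⊕ (ι × B) :=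
    (Equiv.prodCongr (Equiv.refl ι) (Equiv.Finset.union A B hAB).symm).trans
      (Equiv.prodSumDistrib ι A B)
  have key : ∀ z : ι → ℝ, Sum.elim (fun p : ι × A => z p.1 * c p.2)
      (fun p : ι × B => z p.1 * c p.2) = (fun p : ι × ↥(A ∪ B) => z p.1 * c p.2) ∘ e.symm := by
    intro z
    funext p
    rcases p with ⟨i, a⟩ | ⟨i, b⟩ <;> rfl
  rw [key x, key y, isMajorized_comp_equiv_iff]
  rfl

lemma TensorMajorizedOn.union (hAB : Disjoint A B) (hA : TensorMajorizedOn x y c A)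
    (hB : TensorMajorizedOn x y c B) : TensorMajorizedOn x y c (A ∪ B) :=
  (tensorMajorizedOn_union_iff hAB).2 (hA.sumElim hB)

lemma TensorMajorizedOn.of_union (hAB : Disjoint A B) (hsum : ∑ i, x i = ∑ i, y i)
    (hBA : ∀ a ∈ A, ∀ b ∈ B, ∀ p q, y p * c b ≤ y q * c a)
    (h : TensorMajorizedOn x y c (A ∪ B)) :
    TensorMajorizedOn x y c A ∧ TensorMajorizedOn x y c B :=
  ((tensorMajorizedOn_union_iff hAB).1 h).of_sumElim
    (by simp only [sum_mul_apply_coe, hsum]) fun p q => hBA _ p.2.2 _ q.2.2 _ _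

end TensorMajorizedOn

lemma maj_tensor_iff_tensorMajorizedOn {n k m : ℕ} (x y : Fin n → ℝ) (c : Fin k → ℝ)
    (c' : Fin m → ℝ) {S : Finset (Fin k)} (e : Fin m ≃ S) (hc : ∀ t, c' t = c (e t)) :
    Maj (tensor x c') (tensor y c') ↔ TensorMajorizedOn x y c S := by
  let E : Fin (n * m) ≃ Fin n × S := finProdFinEquiv.symm.trans (Equiv.prodCongr (Equiv.refl _) e)
  have key : ∀ z : Fin n → ℝ, tensor z c' = (fun p : Fin n × S => z p.1 * c p.2) ∘ E :=
    fun z => funext fun t => by simp [tensor, E, hc]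
  rw [maj_iff_isMajorized, key x, key y, isMajorized_comp_equiv_iff]
  rfl

def finIccEquiv {k : ℕ} (i j : ℕ) (hij : i ≤ j) (hj : j < k) :
    Fin (j - i + 1) ≃ Finset.Icc (⟨i, by omega⟩ : Fin k) ⟨j, hj⟩ where
  toFun t := ⟨⟨i + t, by have := t.isLt; omega⟩, by
    have := t.isLt; simp only [Finset.mem_Icc, Fin.mk_le_mk]; omega⟩
  invFun s := ⟨s.1 - i, by
    have := Finset.mem_Icc.1 s.2; simp only [Fin.le_def] at this; omega⟩
  left_inv t := by ext; simp
  right_inv s := by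
    have := Finset.mem_Icc.1 s.2; simp only [Fin.le_def] at this
    ext; simp only; omega

section Blocks

variable {n k : ℕ} {x y : Fin n → ℝ} {c : Fin k → ℝ}

lemma mul_le_mul_of_div_le_gu (hn : 0 < n) (hy : Antitone y) (hypos : ∀ i, 0 < y i)
    (hc : Antitone c) (hcpos : ∀ i, 0 < c i) {a b s t : Fin k} (hbreak : c s / c t ≤ gu y)
    (ha : a ≤ t) (hb : s ≤ b) (p q : Fin n) : y p * c b ≤ y q * c a := by
  have hcross : y ⟨0, hn⟩ * c s ≤ y ⟨n - 1, by omega⟩ * c t := by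
    rw [gu, dif_pos hn, div_le_div_iff₀ (hcpos t) (hypos _)] at hbreak
    linarith
  calc y p * c b ≤ y ⟨0, hn⟩ * c s :=
        mul_le_mul (hy (Fin.le_def.2 (Nat.zero_le _))) (hc hb) (hcpos b).le (hypos _).le
    _ ≤ y ⟨n - 1, by omega⟩ * c t := hcross
    _ ≤ y q * c a :=
        mul_le_mul (hy (Fin.le_def.2 (by simp; omega))) (hc ha) (hcpos t).le (hypos q).le

lemma TensorMajorizedOn.Icc_of_isBlock (hn : 0 < n) (hsum : ∑ i, x i = ∑ i, y i)
    (hy : Antitone y) (hypos : ∀ i, 0 < y i) (hc : Antitone c) (hcpos : ∀ i, 0 < c i)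
    {i j : ℕ} (hij : i ≤ j) (hj : j < k) (hblock : IsBlock (gu y) c i j)
    (h : TensorMajorizedOn x y c Finset.univ) :
    TensorMajorizedOn x y c (Finset.Icc ⟨i, by omega⟩ ⟨j, hj⟩) := by
  obtain ⟨_, _, hleft, hright, -⟩ := hblock
  have hsplit_left : (Finset.univ : Finset (Fin k)) =
      Finset.Iio ⟨i, by omega⟩ ∪ Finset.Ici ⟨i, by omega⟩ := by
    ext; simp only [Finset.mem_univ, Finset.mem_union, Finset.mem_Iio, Finset.mem_Ici, true_iff]
    exact lt_or_ge _ _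
  have hsplit_right : Finset.Ici (⟨i, by omega⟩ : Fin k) =
      Finset.Icc ⟨i, by omega⟩ ⟨j, hj⟩ ∪ Finset.Ioi ⟨j, hj⟩ := by
    ext; simp only [Finset.mem_Ici, Finset.mem_union, Finset.mem_Icc, Finset.mem_Ioi, Fin.le_def,
      Fin.lt_def]; omega
  rw [hsplit_left] at h
  have hdisj_left : Disjoint (Finset.Iio (⟨i, by omega⟩ : Fin k)) (Finset.Ici ⟨i, by omega⟩) :=
    Finset.disjoint_left.2 fun a ha ha' => by
      simp only [Finset.mem_Iio, Finset.mem_Ici] at ha ha'; exact absurd ha (not_lt.2 ha')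
  have hdisj_right : Disjoint (Finset.Icc (⟨i, by omega⟩ : Fin k) ⟨j, hj⟩) (Finset.Ioi ⟨j, hj⟩) :=
    Finset.disjoint_left.2 fun a ha ha' => by
      simp only [Finset.mem_Icc, Finset.mem_Ioi] at ha ha'; exact absurd ha.2 (not_le.2 ha')
  replace h := (h.of_union hdisj_left hsum ?_).2
  · rw [hsplit_right] at h
    refine (h.of_union hdisj_right hsum ?_).1
    rcases hright with rfl | ⟨hj1, hbreak⟩
    · intro a _ b hb; have := b.isLt; simp [Fin.lt_def] at hb; omega
    · intro a ha b hb
      simp only [Finset.mem_Icc, Finset.mem_Ioi, Fin.le_def, Fin.lt_def] at ha hb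
      exact mul_le_mul_of_div_le_gu hn hy hypos hc hcpos hbreak (Fin.le_def.2 ha.2)
        (Fin.le_def.2 hb)
  · rcases hleft with rfl | hbreak
    · intro a ha; simp [Fin.lt_def] at ha
    · intro a ha b hb
      simp only [Finset.mem_Iio, Finset.mem_Ici, Fin.le_def, Fin.lt_def] at ha hb
      exact mul_le_mul_of_div_le_gu hn hy hypos hc hcpos hbreak (Fin.le_def.2 (by simp; omega))
        (Fin.le_def.2 hb)

lemma tensorMajorizedOn_Ici_of_isBlock {α : ℝ}
    (hblocks : ∀ (i j : ℕ) (hij : i ≤ j) (hj : j < k), IsBlock α c i j →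
      TensorMajorizedOn x y c (Finset.Icc ⟨i, by omega⟩ ⟨j, hj⟩))
    (i j : ℕ) (hij : i ≤ j) (hj : j < k)
    (hstart : i = 0 ∨ c ⟨i, by omega⟩ / c ⟨i - 1, by omega⟩ ≤ α)
    (hinside : ∀ t, i ≤ t → ∀ ht : t < j, α < c ⟨t + 1, by omega⟩ / c ⟨t, by omega⟩) :
    TensorMajorizedOn x y c (Finset.Ici ⟨i, by omega⟩) := by
  by_cases hlast : j + 1 = k
  · have hIci : Finset.Ici (⟨i, by omega⟩ : Fin k) = Finset.Icc ⟨i, by omega⟩ ⟨j, hj⟩ := by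
      ext t; have := t.isLt
      simp only [Finset.mem_Ici, Finset.mem_Icc, Fin.le_def]; omega
    rw [hIci]
    exact hblocks i j hij hj ⟨hij, hj, hstart, Or.inl (by omega), hinside⟩
  have hj1 : j + 1 < k := by omega
  by_cases hbreak : c ⟨j + 1, hj1⟩ / c ⟨j, hj⟩ ≤ α
  · have hIci : Finset.Ici (⟨i, by omega⟩ : Fin k) =
        Finset.Icc ⟨i, by omega⟩ ⟨j, hj⟩ ∪ Finset.Ici ⟨j + 1, hj1⟩ := by
      ext t
      simp only [Finset.mem_Ici, Finset.mem_union, Finset.mem_Icc, Fin.le_def]; omega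
    rw [hIci]
    refine (hblocks i j hij hj ⟨hij, hj, hstart, Or.inr ⟨hj1, hbreak⟩, hinside⟩).union ?_
      (tensorMajorizedOn_Ici_of_isBlock hblocks (j + 1) (j + 1) le_rfl hj1 (Or.inr hbreak)
        fun t _ _ => by omega)
    exact Finset.disjoint_left.2 fun t ht ht' => by
      simp only [Finset.mem_Icc, Finset.mem_Ici, Fin.le_def] at ht ht'; omega
  · refine tensorMajorizedOn_Ici_of_isBlock hblocks i (j + 1) (by omega) hj1 hstart
      fun t ht1 ht2 => ?_
    rcases (show t < j ∨ t = j by omega) with ht | rfl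
    · exact hinside t ht1 ht
    · exact not_le.1 hbreak
termination_by k - j

lemma tensorMajorizedOn_univ_of_isBlock (hk : 0 < k) {α : ℝ}
    (hblocks : ∀ (i j : ℕ) (hij : i ≤ j) (hj : j < k), IsBlock α c i j →
      TensorMajorizedOn x y c (Finset.Icc ⟨i, by omega⟩ ⟨j, hj⟩)) :
    TensorMajorizedOn x y c Finset.univ := by
  have huniv : (Finset.univ : Finset (Fin k)) = Finset.Ici ⟨0, hk⟩ := by
    ext; simp [Fin.le_def]
  rw [huniv]
  exact tensorMajorizedOn_Ici_of_isBlock hblocks 0 0 le_rfl hk (Or.inl rfl) fun t _ _ => by omega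

end Blocks

/-- Lemma 8 of the paper. With `[c]_{g_u(y)}` the
decomposition of `c` according to `g_u(y)`: for `x ∈ Vⁿ`,
`x ⊗ c ≺ y ⊗ c` iff `x ⊗ c^i ≺ y ⊗ c^i` for every block `c^i` of the
decomposition. -/
theorem stmt13 {n k : ℕ} (hn : 0 < n) (hk : 0 < k)
    (y : Fin n → ℝ) (hy : y ∈ Vn n) (hypos : ∀ i, 0 < y i)
    (c : Fin k → ℝ) (hcpos : ∀ i, 0 < c i) (hcanti : Antitone c)
    (x : Fin n → ℝ) (hx : x ∈ Vn n) :
    Maj (tensor x c) (tensor y c) ↔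
      ∀ (i j : ℕ) (hij : i ≤ j) (hj : j < k), IsBlock (gu y) c i j →
        Maj (tensor x (seg c i j hij hj)) (tensor y (seg c i j hij hj)) := by
  have hsum : ∑ i, x i = ∑ i, y i := hx.2.1.trans hy.2.1.symm
  have hseg : ∀ i j hij hj, Maj (tensor x (seg c i j hij hj)) (tensor y (seg c i j hij hj)) ↔
      TensorMajorizedOn x y c (Finset.Icc ⟨i, by omega⟩ ⟨j, hj⟩) := fun i j hij hj =>
    maj_tensor_iff_tensorMajorizedOn x y c _ (finIccEquiv i j hij hj) fun _ => rfl
  rw [maj_tensor_iff_tensorMajorizedOn x y c c (Equiv.subtypeUnivEquiv Finset.mem_univ).symm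
    fun _ => rfl]
  exact ⟨fun h i j hij hj hblock => (hseg i j hij hj).2
      (h.Icc_of_isBlock hn hsum hy.2.2 hypos hcanti hcpos hij hj hblock),
    fun h => tensorMajorizedOn_univ_of_isBlock hk fun i j hij hj hblock =>
      (hseg i j hij hj).1 (h i j hij hj hblock)⟩

end
end

section
/- Let y ∈ V^n be a probability vector with positive components and c a vector with positive non-increasing components satisfying l_u(c) > g_u(y). Then the interior of T(y,c) relative to V^n equals {x ∈ V^n : x⊗c ◁ y⊗c}. -/
noncomputable section

namespace Stmt14Aux

open Finset

lemma eSum_ex {m : ℕ} (v : Fin m → ℝ) (l : ℕ) (hl : l ≤ m) :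
    ∃ s : Finset (Fin m), s.card = l ∧ eSum v l = ∑ i ∈ s, v i := by
  have hne : {r | ∃ s : Finset (Fin m), s.card = l ∧ r = ∑ i ∈ s, v i}.Nonempty := by
    obtain ⟨s, -, hs⟩ := Finset.exists_subset_card_eq (by simpa using hl : l ≤ (Finset.univ : Finset (Fin m)).card)
    exact ⟨∑ i ∈ s, v i, s, hs, rfl⟩
  have hfin : {r | ∃ s : Finset (Fin m), s.card = l ∧ r = ∑ i ∈ s, v i}.Finite := by
    have : {r | ∃ s : Finset (Fin m), s.card = l ∧ r = ∑ i ∈ s, v i} ⊆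
        (fun s : Finset (Fin m) => ∑ i ∈ s, v i) '' Set.univ := by
      rintro r ⟨s, -, rfl⟩; exact ⟨s, trivial, rfl⟩
    exact Set.Finite.subset ((Set.finite_univ).image _) this
  obtain ⟨s, hs, h⟩ := hne.csSup_mem hfin
  exact ⟨s, hs, h⟩

lemma le_eSum {m : ℕ} (v : Fin m → ℝ) (l : ℕ) (s : Finset (Fin m)) (hs : s.card = l) :
    ∑ i ∈ s, v i ≤ eSum v l := by
  have hfin : {r | ∃ s : Finset (Fin m), s.card = l ∧ r = ∑ i ∈ s, v i}.Finite := by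
    have : {r | ∃ s : Finset (Fin m), s.card = l ∧ r = ∑ i ∈ s, v i} ⊆
        (fun s : Finset (Fin m) => ∑ i ∈ s, v i) '' Set.univ := by
      rintro r ⟨s, -, rfl⟩; exact ⟨s, trivial, rfl⟩
    exact Set.Finite.subset ((Set.finite_univ).image _) this
  exact le_csSup hfin.bddAbove ⟨s, hs, rfl⟩

lemma sum_tensor {n k : ℕ} (x : Fin n → ℝ) (c : Fin k → ℝ) :
    ∑ i, tensor x c i = (∑ i, x i) * (∑ j, c j) := by
  have key : ∀ p : Fin n × Fin k, tensor x c (finProdFinEquiv p) = x p.1 * c p.2 := by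
    intro p; simp [tensor]
  rw [← Equiv.sum_comp (finProdFinEquiv : Fin n × Fin k ≃ Fin (n * k)) (tensor x c)]
  simp only [key]
  rw [Fintype.sum_prod_type, Finset.sum_mul_sum]

lemma tensor_pair_le {n k : ℕ} (x : Fin n → ℝ) (c : Fin k → ℝ) (l : ℕ)
    (T : Finset (Fin n × Fin k)) (hT : T.card = l) :
    ∑ p ∈ T, x p.1 * c p.2 ≤ eSum (tensor x c) l := by
  have hS : (T.image (finProdFinEquiv : Fin n × Fin k ≃ Fin (n * k))).card = l := by
    rw [Finset.card_image_of_injective _ (Equiv.injective _), hT]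
  have key : ∀ p : Fin n × Fin k, tensor x c (finProdFinEquiv p) = x p.1 * c p.2 := by
    intro p; simp [tensor]
  have h2 := le_eSum (tensor x c) l _ hS
  rw [Finset.sum_image (by intro a _ b _ h; exact Equiv.injective _ h)] at h2
  simpa only [key] using h2

lemma tensor_pair_ex {n k : ℕ} (x : Fin n → ℝ) (c : Fin k → ℝ) (l : ℕ) (hl : l ≤ n * k) :
    ∃ T : Finset (Fin n × Fin k), T.card = l ∧
      eSum (tensor x c) l = ∑ p ∈ T, x p.1 * c p.2 := by
  obtain ⟨s, hs, h⟩ := eSum_ex (tensor x c) l (by simpa using hl)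
  refine ⟨s.image (finProdFinEquiv : Fin n × Fin k ≃ Fin (n * k)).symm, ?_, ?_⟩
  · rw [Finset.card_image_of_injective _ (Equiv.injective _), hs]
  · rw [h, Finset.sum_image (by intro a _ b _ hh; exact Equiv.injective _ hh)]
    apply Finset.sum_congr rfl
    intro i _
    simp [tensor]

end Stmt14Aux

namespace Stmt14Aux

lemma eSum_full {m : ℕ} (v : Fin m → ℝ) : eSum v m = ∑ i, v i := by
  have h : {r | ∃ s : Finset (Fin m), s.card = m ∧ r = ∑ i ∈ s, v i} = {∑ i, v i} := by
    ext r
    simp only [Set.mem_setOf_eq, Set.mem_singleton_iff]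
    constructor
    · rintro ⟨s, hs, rfl⟩
      have : s = Finset.univ := Finset.eq_univ_of_card s (by simpa using hs)
      rw [this]
    · rintro rfl; exact ⟨Finset.univ, by simp, rfl⟩
  rw [eSum, h, csSup_singleton]

lemma sum_pairs {n k : ℕ} (x : Fin n → ℝ) (c : Fin k → ℝ) :
    ∑ p : Fin n × Fin k, x p.1 * c p.2 = (∑ i, x i) * (∑ j, c j) := by
  rw [Fintype.sum_prod_type, Finset.sum_mul_sum]

end Stmt14Aux

set_option maxHeartbeats 1000000 in
open Stmt14Aux in
/-- Lemma 9 of the paper. If `l_u(c) > g_u(y)`, the interior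
of `T(y,c)` relative to `Vⁿ` equals `{x ∈ Vⁿ : x ⊗ c ◁ y ⊗ c}`. -/
theorem stmt14 {n k : ℕ} (hn : 0 < n) (hk : 0 < k)
    (y : Fin n → ℝ) (hy : y ∈ Vn n) (hypos : ∀ i, 0 < y i)
    (c : Fin k → ℝ) (hcpos : ∀ i, 0 < c i) (hcanti : Antitone c)
    (hlg : lu c > gu y) :
    interior {x : Vn n | Maj (tensor (x : Fin n → ℝ) c) (tensor y c)} =
      {x : Vn n | SMaj (tensor (x : Fin n → ℝ) c) (tensor y c)} := by
  classical
  have hguy : gu y = y ⟨n - 1, Nat.sub_lt hn Nat.one_pos⟩ / y ⟨0, hn⟩ := by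
    rw [gu, dif_pos hn]
  have hguypos : 0 < gu y := by
    rw [hguy]; exact div_pos (hypos _) (hypos _)
  have hk2 : 2 ≤ k := by
    by_contra h
    have hk1 : k = 1 := by omega
    subst hk1
    have hempty : {r | ∃ i : ℕ, ∃ h : i + 1 < 1,
        r = c ⟨i + 1, h⟩ / c ⟨i, Nat.lt_of_succ_lt h⟩} = ∅ := by
      ext r
      simp only [Set.mem_setOf_eq, Set.mem_empty_iff_false, iff_false]
      rintro ⟨i, hi, -⟩; omega
    have : lu c = 0 := by rw [lu, hempty, Real.sInf_empty]
    rw [this] at hlg; linarith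
  have hbdd : BddBelow {r | ∃ i : ℕ, ∃ h : i + 1 < k,
      r = c ⟨i + 1, h⟩ / c ⟨i, Nat.lt_of_succ_lt h⟩} := by
    refine ⟨0, ?_⟩
    rintro r ⟨i, hi, rfl⟩
    exact le_of_lt (div_pos (hcpos _) (hcpos _))
  have hlu_le : ∀ (i : ℕ) (hi : i + 1 < k),
      lu c ≤ c ⟨i + 1, hi⟩ / c ⟨i, Nat.lt_of_succ_lt hi⟩ := by
    intro i hi
    exact csInf_le hbdd ⟨i, hi, rfl⟩
  have hn2 : 2 ≤ n := by
    by_contra h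
    have hn1 : n = 1 := by omega
    subst hn1
    have hgu1 : gu y = 1 := by
      rw [hguy]
      exact div_self (ne_of_gt (hypos _))
    have h1 : lu c ≤ c ⟨1, by omega⟩ / c ⟨0, by omega⟩ := hlu_le 0 (by omega)
    have h2 : c ⟨1, by omega⟩ / c ⟨0, by omega⟩ ≤ 1 := by
      rw [div_le_one (hcpos _)]
      exact hcanti (by simp [Fin.le_def])
    rw [hgu1] at hlg; linarith
  have hnk4 : 4 ≤ n * k := le_trans (by norm_num) (Nat.mul_le_mul hn2 hk2)
  set i0 : Fin n := ⟨0, hn⟩ with hi0def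
  set iL : Fin n := ⟨n - 1, by omega⟩ with hiLdef
  have hi0val : (i0 : ℕ) = 0 := rfl
  have hiLval : (iL : ℕ) = n - 1 := rfl
  have hne0L : i0 ≠ iL := by
    apply Fin.ne_of_val_ne
    rw [hi0val, hiLval]; omega
  have hi0le : ∀ i : Fin n, i0 ≤ i := fun i => by
    rw [Fin.le_def, hi0val]; omega
  have hleiL : ∀ i : Fin n, i ≤ iL := fun i => by
    rw [Fin.le_def, hiLval]; have := i.isLt; omega
  have hkey : ∀ (j : ℕ) (hj : j + 1 < k),
      y iL * c ⟨j, Nat.lt_of_succ_lt hj⟩ < y i0 * c ⟨j + 1, hj⟩ := by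
    intro j hj
    have h1 : gu y < c ⟨j + 1, hj⟩ / c ⟨j, Nat.lt_of_succ_lt hj⟩ :=
      lt_of_lt_of_le hlg (hlu_le j hj)
    rw [hguy] at h1
    rw [div_lt_div_iff₀ (hypos _) (hcpos _)] at h1
    calc y iL * c ⟨j, Nat.lt_of_succ_lt hj⟩
        = y ⟨n - 1, Nat.sub_lt hn Nat.one_pos⟩ * c ⟨j, Nat.lt_of_succ_lt hj⟩ := rfl
      _ < c ⟨j + 1, hj⟩ * y ⟨0, hn⟩ := h1
      _ = y i0 * c ⟨j + 1, hj⟩ := by ring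
  have hysum : ∑ i, y i = 1 := hy.2.1
  have hcardP : Fintype.card (Fin n × Fin k) = n * k := by simp
  ext x
  simp only [Set.mem_setOf_eq]
  constructor
  · -- hard direction
    intro hxint
    have hxA := interior_subset hxint
    simp only [Set.mem_setOf_eq] at hxA
    obtain ⟨hxnn, hxsum, hxanti⟩ := x.2
    -- x iL is positive
    have hk1 : k - 1 < k := by omega
    have hxlast : 0 < (x : Fin n → ℝ) iL := by
      have h1 := hxA.2 (n * k - 1) (by omega) (by omega)
      -- lower bound for x side
      have hT1 : ((Finset.univ : Finset (Fin n × Fin k)).erase (iL, ⟨k - 1, hk1⟩)).card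
          = n * k - 1 := by
        rw [Finset.card_erase_of_mem (Finset.mem_univ _), Finset.card_univ, hcardP]
      have hlow := tensor_pair_le (x : Fin n → ℝ) c (n * k - 1) _ hT1
      rw [Finset.sum_erase_eq_sub (Finset.mem_univ _), sum_pairs, hxsum, one_mul] at hlow
      -- upper bound for y side
      have hup : eSum (tensor y c) (n * k - 1) ≤ (∑ j, c j) - y iL * c ⟨k - 1, hk1⟩ := by
        obtain ⟨T, hTcard, hTeq⟩ := tensor_pair_ex y c (n * k - 1) (by omega)
        have hTc : Tᶜ.card = 1 := by
          rw [Finset.card_compl, hcardP, hTcard]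
          omega
        obtain ⟨p0, hp0⟩ := Finset.card_eq_one.1 hTc
        have hTval : T = Finset.univ.erase p0 := by
          ext p
          simp only [Finset.mem_erase, Finset.mem_univ, and_true]
          rw [← Finset.notMem_compl, hp0]
          simp
        rw [hTval] at hTeq
        rw [Finset.sum_erase_eq_sub (Finset.mem_univ p0)] at hTeq
        rw [sum_pairs, hysum, one_mul] at hTeq
        rw [hTeq]
        have hyc : y iL * c ⟨k - 1, hk1⟩ ≤ y p0.1 * c p0.2 := by
          apply mul_le_mul
          · exact hy.2.2 (hleiL _)
          · apply hcanti
            rw [Fin.le_def]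
            have := p0.2.isLt
            simp only [Fin.val_mk]
            omega
          · exact le_of_lt (hcpos _)
          · exact le_of_lt (hypos _)
        linarith
      have hyx : y iL * c ⟨k - 1, hk1⟩ ≤ (x : Fin n → ℝ) iL * c ⟨k - 1, hk1⟩ := by
        linarith
      have hyL := hypos iL
      have hc := hcpos (⟨k - 1, hk1⟩ : Fin k)
      nlinarith
    refine ⟨?_, ?_⟩
    · rw [sum_tensor, sum_tensor, hxsum, hysum]
    intro l hl1 hl2
    have hle := hxA.2 l hl1 (by omega)
    rcases lt_or_eq_of_le hle with hlt | heq
    · exact hlt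
    exfalso
    -- setup for the exchange argument
    set M := eSum (tensor (x : Fin n → ℝ) c) l with hMdef
    set w : Fin n × Fin k → ℝ :=
      fun p => if p.1 = i0 then c p.2 else if p.1 = iL then -c p.2 else 0 with hwdef
    set Ω : Finset (Finset (Fin n × Fin k)) :=
      (Finset.powersetCard l Finset.univ).filter
        (fun T => ∑ p ∈ T, (x : Fin n → ℝ) p.1 * c p.2 = M) with hΩdef
    have hΩne : Ω.Nonempty := by
      obtain ⟨T0, hT0c, hT0e⟩ := tensor_pair_ex (x : Fin n → ℝ) c l (by omega)
      exact ⟨T0, Finset.mem_filter.2 ⟨Finset.mem_powersetCard_univ.2 hT0c, hT0e.symm⟩⟩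
    obtain ⟨T, hTmem, hTmax⟩ := Finset.exists_max_image Ω (fun T => ∑ p ∈ T, w p) hΩne
    have hTcard : T.card = l := Finset.mem_powersetCard_univ.1 (Finset.mem_filter.1 hTmem).1
    have hTf : ∑ p ∈ T, (x : Fin n → ℝ) p.1 * c p.2 = M := (Finset.mem_filter.1 hTmem).2
    -- exchange lemma
    have hswap : ∀ p q : Fin n × Fin k, p ∈ T → q ∉ T →
        (x : Fin n → ℝ) p.1 * c p.2 ≤ (x : Fin n → ℝ) q.1 * c q.2 → w p < w q → False := by
      intro p q hp hq hf hw
      have hqe : q ∉ T.erase p := fun h => hq (Finset.mem_of_mem_erase h)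
      have hcard : (insert q (T.erase p)).card = l := by
        rw [Finset.card_insert_of_notMem hqe, Finset.card_erase_of_mem hp, hTcard]
        omega
      have hfT' : ∑ r ∈ insert q (T.erase p), (x : Fin n → ℝ) r.1 * c r.2
          = M - (x : Fin n → ℝ) p.1 * c p.2 + (x : Fin n → ℝ) q.1 * c q.2 := by
        rw [Finset.sum_insert hqe, Finset.sum_erase_eq_sub hp, hTf]; ring
      have hgT' : ∑ r ∈ insert q (T.erase p), w r = (∑ r ∈ T, w r) - w p + w q := by
        rw [Finset.sum_insert hqe, Finset.sum_erase_eq_sub hp]; ring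
      have h1 : ∑ r ∈ insert q (T.erase p), (x : Fin n → ℝ) r.1 * c r.2 ≤ M :=
        tensor_pair_le _ _ _ _ hcard
      have hmem' : insert q (T.erase p) ∈ Ω :=
        Finset.mem_filter.2 ⟨Finset.mem_powersetCard_univ.2 hcard, by rw [hfT']; linarith⟩
      have := hTmax _ hmem'
      rw [hgT'] at this
      linarith
    -- claim A : row i0 dominates
    have hA : ∀ p : Fin n × Fin k, p ∈ T → (i0, p.2) ∈ T := by
      intro p hp
      by_cases hp0 : p.1 = i0
      · have : (i0, p.2) = p := by rw [← hp0]
        rwa [this]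
      by_contra hq
      refine hswap p (i0, p.2) hp hq ?_ ?_
      · exact mul_le_mul_of_nonneg_right (hxanti (hi0le _)) (le_of_lt (hcpos _))
      · have hwq : w (i0, p.2) = c p.2 := by simp [hwdef]
        have hwp : w p ≤ 0 := by
          by_cases hpL : p.1 = iL
          · have : w p = -c p.2 := by simp [hwdef, hp0, hpL, Ne.symm hne0L]
            rw [this]
            linarith [hcpos p.2]
          · have : w p = 0 := by simp [hwdef, hp0, hpL]
            rw [this]
        rw [hwq]
        linarith [hcpos p.2]
    -- claim B : columns of row iL are full
    have hB : ∀ (j : Fin k), (iL, j) ∈ T → ∀ i : Fin n, (i, j) ∈ T := by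
      intro j hj i
      by_cases hiL : i = iL
      · rwa [hiL]
      by_contra hq
      refine hswap (iL, j) (i, j) hj hq ?_ ?_
      · exact mul_le_mul_of_nonneg_right (hxanti (hleiL _)) (le_of_lt (hcpos _))
      · have hwp : w (iL, j) = -c j := by simp [hwdef, Ne.symm hne0L]
        have hwq : 0 ≤ w (i, j) := by
          by_cases hi0 : i = i0
          · have : w (i, j) = c j := by simp [hwdef, hi0]
            rw [this]
            exact le_of_lt (hcpos j)
          · have : w (i, j) = 0 := by simp [hwdef, hi0, hiL]
            rw [this]
        rw [hwp]
        linarith [hcpos j]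
    -- column sets
    set J0 : Finset (Fin k) := Finset.univ.filter (fun j => (i0, j) ∈ T) with hJ0def
    set JL : Finset (Fin k) := Finset.univ.filter (fun j => (iL, j) ∈ T) with hJLdef
    have hJsub : JL ⊆ J0 := by
      intro j hj
      simp only [hJLdef, Finset.mem_filter, Finset.mem_univ, true_and] at hj
      simp only [hJ0def, Finset.mem_filter, Finset.mem_univ, true_and]
      exact hA (iL, j) hj
    have hgdecomp : ∑ p ∈ T, w p = (∑ j ∈ J0, c j) - ∑ j ∈ JL, c j := by
      have hsplit : ∀ p : Fin n × Fin k, w p =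
          (if p.1 = i0 then c p.2 else 0) - (if p.1 = iL then c p.2 else 0) := by
        intro p
        by_cases h1 : p.1 = i0
        · simp [hwdef, h1, hne0L, Ne.symm hne0L]
        · by_cases h2 : p.1 = iL <;> simp [hwdef, h1, h2, hne0L, Ne.symm hne0L]
      rw [Finset.sum_congr rfl (fun p _ => hsplit p), Finset.sum_sub_distrib]
      have himg : ∀ (i : Fin n), T.filter (fun p => p.1 = i) =
          (Finset.univ.filter (fun j => (i, j) ∈ T)).image (fun j => (i, j)) := by
        intro i
        ext q
        obtain ⟨a, b⟩ := q
        simp only [Finset.mem_filter, Finset.mem_image, Finset.mem_univ, true_and]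
        constructor
        · rintro ⟨hp, rfl⟩
          exact ⟨b, hp, rfl⟩
        · rintro ⟨j, hj, h⟩
          injection h with h1 h2
          subst h1
          subst h2
          exact ⟨hj, rfl⟩
      have hsumrow : ∀ (i : Fin n), ∑ p ∈ T, (if p.1 = i then c p.2 else 0)
          = ∑ j ∈ Finset.univ.filter (fun j => (i, j) ∈ T), c j := by
        intro i
        rw [← Finset.sum_filter, himg i,
          Finset.sum_image (by intro a _ b _ h; simpa using h)]
      rw [hsumrow i0, hsumrow iL]
    by_cases hgpos : 0 < ∑ p ∈ T, w p
    · -- perturbation case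
      obtain ⟨δ, hδ, hball⟩ := Metric.mem_nhds_iff.1 (mem_interior_iff_mem_nhds.1 hxint)
      set ε : ℝ := min (δ / 2) ((x : Fin n → ℝ) iL) with hεdef
      have hεpos : 0 < ε := lt_min (by linarith) hxlast
      have hεle : ε ≤ (x : Fin n → ℝ) iL := min_le_right _ _
      set u : Fin n → ℝ := fun i => if i = i0 then ε else if i = iL then -ε else 0 with hudef
      set φ : Fin n → ℝ := fun i => (x : Fin n → ℝ) i + u i with hφdef
      have hu0 : u i0 = ε := by simp [hudef]
      have huL : u iL = -ε := by simp [hudef, Ne.symm hne0L]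
      have humid : ∀ i, i ≠ i0 → i ≠ iL → u i = 0 := fun i h1 h2 => by simp [hudef, h1, h2]
      have huabs : ∀ i, |u i| ≤ ε := by
        intro i
        by_cases h1 : i = i0
        · rw [h1, hu0, abs_of_pos hεpos]
        · by_cases h2 : i = iL
          · rw [h2, huL, abs_neg, abs_of_pos hεpos]
          · rw [humid i h1 h2, abs_zero]
            linarith
      have hφVn : φ ∈ Vn n := by
        refine ⟨?_, ?_, ?_⟩
        · intro i
          have h1 : -ε ≤ u i := (abs_le.1 (huabs i)).1
          have h2 : (x : Fin n → ℝ) iL ≤ (x : Fin n → ℝ) i := hxanti (hleiL i)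
          simp only [hφdef]
          linarith
        · simp only [hφdef]
          rw [Finset.sum_add_distrib, hxsum]
          have husum : ∑ i, u i = 0 := by
            have hsplit : ∀ i, u i = (if i = i0 then ε else 0) + (if i = iL then -ε else 0) := by
              intro i
              by_cases h1 : i = i0
              · simp [hudef, h1, hne0L, Ne.symm hne0L]
              · by_cases h2 : i = iL <;> simp [hudef, h1, h2, hne0L, Ne.symm hne0L]
            rw [Finset.sum_congr rfl (fun i _ => hsplit i), Finset.sum_add_distrib]
            simp [Finset.sum_ite_eq']
          rw [husum, add_zero]
        · intro a b hab
          simp only [hφdef]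
          rcases eq_or_ne b i0 with hb0 | hb0
          · have ha0 : a = i0 := le_antisymm (hb0 ▸ hab) (hi0le a)
            rw [ha0, hb0]
          · rcases eq_or_ne a iL with haL | haL
            · have hbL : b = iL := le_antisymm (hleiL b) (haL ▸ hab)
              rw [haL, hbL]
            · have h1 : u b ≤ 0 := by
                by_cases hbL : b = iL
                · rw [hbL, huL]; linarith
                · rw [humid b hb0 hbL]
              have h2 : 0 ≤ u a := by
                by_cases ha0 : a = i0
                · rw [ha0, hu0]; linarith
                · rw [humid a ha0 haL]
              have h3 := hxanti hab
              linarith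
      have hdist : dist (⟨φ, hφVn⟩ : ↥(Vn n)) x < δ := by
        rw [Subtype.dist_eq]
        have hle : dist φ (x : Fin n → ℝ) ≤ ε := by
          rw [dist_pi_le_iff (le_of_lt hεpos)]
          intro i
          rw [Real.dist_eq]
          simp only [hφdef]
          simpa using huabs i
        have : ε ≤ δ / 2 := min_le_left _ _
        calc dist φ (x : Fin n → ℝ) ≤ ε := hle
          _ < δ := by linarith
      have hφmem := hball (Metric.mem_ball.2 hdist)
      simp only [Set.mem_setOf_eq] at hφmem
      have hTφ : ∑ p ∈ T, φ p.1 * c p.2 = M + ε * ∑ p ∈ T, w p := by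
        have hpt : ∀ p : Fin n × Fin k, φ p.1 * c p.2
            = (x : Fin n → ℝ) p.1 * c p.2 + ε * w p := by
          intro p
          have hw : u p.1 * c p.2 = ε * w p := by
            by_cases h1 : p.1 = i0
            · have hwp : w p = c p.2 := by simp [hwdef, h1]
              rw [h1, hu0, hwp]
            · by_cases h2 : p.1 = iL
              · have hwp : w p = -c p.2 := by simp [hwdef, h1, h2, Ne.symm hne0L]
                rw [h2, huL, hwp]
                ring
              · have hwp : w p = 0 := by simp [hwdef, h1, h2]
                rw [humid p.1 h1 h2, hwp]
                ring
          simp only [hφdef]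
          rw [add_mul, hw]
        rw [Finset.sum_congr rfl (fun p _ => hpt p), Finset.sum_add_distrib, hTf,
          ← Finset.mul_sum]
      have hup2 := tensor_pair_le φ c l T hTcard
      rw [hTφ] at hup2
      have hcontra := hφmem.2 l hl1 (by omega)
      have hgain : 0 < ε * ∑ p ∈ T, w p := mul_pos hεpos hgpos
      rw [← heq] at hcontra
      linarith
    · -- product case
      push_neg at hgpos
      rw [hgdecomp] at hgpos
      have hJeq : J0 = JL := by
        apply Finset.Subset.antisymm _ hJsub
        by_contra hsub
        have hne : (J0 \ JL).Nonempty := by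
          rw [Finset.sdiff_nonempty]
          exact hsub
        have hpos : 0 < ∑ j ∈ J0 \ JL, c j := Finset.sum_pos (fun j _ => hcpos j) hne
        rw [Finset.sum_sdiff_eq_sub hJsub] at hpos
        linarith
      have hTprod : T = Finset.univ ×ˢ JL := by
        ext p
        constructor
        · intro hp
          have h0 : (i0, p.2) ∈ T := hA p hp
          have hmem0 : p.2 ∈ J0 := by
            simp only [hJ0def, Finset.mem_filter, Finset.mem_univ, true_and]
            exact h0
          rw [hJeq] at hmem0
          exact Finset.mem_product.2 ⟨Finset.mem_univ _, hmem0⟩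
        · intro hp
          have h2 : p.2 ∈ JL := (Finset.mem_product.1 hp).2
          simp only [hJLdef, Finset.mem_filter, Finset.mem_univ, true_and] at h2
          have h3 := hB p.2 h2 p.1
          rwa [Prod.mk.eta] at h3
      have hcardprod : l = n * JL.card := by
        rw [← hTcard, hTprod, Finset.card_product, Finset.card_univ, Fintype.card_fin]
      have hfprod : M = ∑ j ∈ JL, c j := by
        rw [← hTf, hTprod]
        simp only [Finset.sum_product]
        rw [← Finset.sum_mul_sum, hxsum, one_mul]
      have hJLcard1 : 1 ≤ JL.card := by
        by_contra h
        have h0 : JL.card = 0 := by omega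
        rw [h0, Nat.mul_zero] at hcardprod
        omega
      have hJLcardk : JL.card < k := by
        by_contra h
        push_neg at h
        have : n * k ≤ n * JL.card := Nat.mul_le_mul_left n h
        omega
      have hbound : ∃ (j : ℕ) (hj : j + 1 < k),
          ¬(((⟨j, Nat.lt_of_succ_lt hj⟩ : Fin k) ∈ JL) ↔ ((⟨j + 1, hj⟩ : Fin k) ∈ JL)) := by
        by_contra hcon
        push_neg at hcon
        have hconst : ∀ (j : ℕ) (hjk : j < k),
            ((⟨j, hjk⟩ : Fin k) ∈ JL ↔ (⟨0, by omega⟩ : Fin k) ∈ JL) := by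
          intro j
          induction j with
          | zero => intro hjk; exact Iff.rfl
          | succ m ih =>
            intro hjk
            have hm : m < k := by omega
            rw [← hcon m hjk]
            exact ih hm
        by_cases h0 : (⟨0, by omega⟩ : Fin k) ∈ JL
        · have huniv : JL = Finset.univ := by
            ext j
            simp only [Finset.mem_univ, iff_true]
            exact (hconst j.1 j.2).2 h0
          rw [huniv, Finset.card_univ, Fintype.card_fin] at hJLcardk
          omega
        · have hempty : JL = ∅ := by
            ext j
            simp only [Finset.notMem_empty, iff_false]
            intro hj
            exact h0 ((hconst j.1 j.2).1 hj)
          rw [hempty, Finset.card_empty] at hJLcard1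
          omega
      obtain ⟨j, hj, hjne⟩ := hbound
      have hcle : c ⟨j + 1, hj⟩ ≤ c ⟨j, Nat.lt_of_succ_lt hj⟩ := by
        apply hcanti
        rw [Fin.le_def]
        exact Nat.le_succ j
      obtain ⟨jin, jout, hjin, hjout, hyineq⟩ :
          ∃ jin jout : Fin k, jin ∈ JL ∧ jout ∉ JL ∧ y iL * c jin < y i0 * c jout := by
        by_cases hmem : (⟨j, Nat.lt_of_succ_lt hj⟩ : Fin k) ∈ JL
        · have hout : (⟨j + 1, hj⟩ : Fin k) ∉ JL := fun h => hjne (iff_of_true hmem h)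
          exact ⟨_, _, hmem, hout, hkey j hj⟩
        · have hin : (⟨j + 1, hj⟩ : Fin k) ∈ JL := by
            by_contra h
            exact hjne (iff_of_false hmem h)
          refine ⟨_, _, hin, hmem, ?_⟩
          have h1 := hkey j hj
          have h2 : y iL * c ⟨j + 1, hj⟩ ≤ y iL * c ⟨j, Nat.lt_of_succ_lt hj⟩ :=
            mul_le_mul_of_nonneg_left hcle (le_of_lt (hypos _))
          have h3 : y i0 * c ⟨j + 1, hj⟩ ≤ y i0 * c ⟨j, Nat.lt_of_succ_lt hj⟩ :=
            mul_le_mul_of_nonneg_left hcle (le_of_lt (hypos _))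
          linarith
      have hinmem : (iL, jin) ∈ Finset.univ ×ˢ JL :=
        Finset.mem_product.2 ⟨Finset.mem_univ _, hjin⟩
      have houtmem : (i0, jout) ∉ (Finset.univ ×ˢ JL).erase (iL, jin) := by
        intro h
        exact hjout (Finset.mem_product.1 (Finset.mem_of_mem_erase h)).2
      have hcard2 : (insert (i0, jout) ((Finset.univ ×ˢ JL).erase (iL, jin))).card = l := by
        rw [Finset.card_insert_of_notMem houtmem, Finset.card_erase_of_mem hinmem,
          Finset.card_product, Finset.card_univ, Fintype.card_fin]
        omega
      have hsum2 := tensor_pair_le y c l _ hcard2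
      rw [Finset.sum_insert houtmem, Finset.sum_erase_eq_sub hinmem] at hsum2
      have hyprod : ∑ p ∈ Finset.univ ×ˢ JL, y p.1 * c p.2 = ∑ j' ∈ JL, c j' := by
        simp only [Finset.sum_product]
        rw [← Finset.sum_mul_sum, hysum, one_mul]
      rw [hyprod, ← heq, hfprod] at hsum2
      linarith
  · -- easy direction
    intro hxS
    set W : Set (Fin n → ℝ) :=
      ⋂ l ∈ Finset.Icc 1 (n * k - 1), ⋂ s ∈ Finset.powersetCard l (Finset.univ : Finset (Fin (n * k))),
        {z : Fin n → ℝ | ∑ i ∈ s, tensor z c i < eSum (tensor y c) l} with hWdef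
    have hWopen : IsOpen W := by
      apply isOpen_biInter_finset
      intro l _
      apply isOpen_biInter_finset
      intro s _
      apply isOpen_lt _ continuous_const
      apply continuous_finset_sum
      intro i _
      simp only [tensor]
      exact (continuous_apply _).mul continuous_const
    have hmemW : ∀ z : Fin n → ℝ, z ∈ Vn n →
        (z ∈ W ↔ ∀ l : ℕ, 1 ≤ l → l + 1 ≤ n * k →
          eSum (tensor z c) l < eSum (tensor y c) l) := by
      intro z hz
      simp only [hWdef, Set.mem_iInter, Set.mem_setOf_eq, Finset.mem_Icc,
        Finset.mem_powersetCard_univ]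
      constructor
      · intro h l hl1 hl2
        obtain ⟨s, hs, hse⟩ := eSum_ex (tensor z c) l (by omega)
        rw [hse]
        exact h l ⟨hl1, by omega⟩ s hs
      · intro h l hl s hs
        calc ∑ i ∈ s, tensor z c i ≤ eSum (tensor z c) l := le_eSum _ _ _ hs
          _ < eSum (tensor y c) l := h l hl.1 (by omega)
    apply mem_interior.2
    refine ⟨Subtype.val ⁻¹' W, ?_, hWopen.preimage continuous_subtype_val, ?_⟩
    · rintro ⟨z, hz⟩ hzW
      simp only [Set.mem_preimage] at hzW
      constructor
      · simp only [sum_tensor, hz.2.1, hysum]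
      intro l hl1 hl2
      rcases eq_or_lt_of_le hl2 with hleq | hllt
      · have h1 : eSum (tensor z c) l = ∑ i, tensor z c i := by rw [hleq]; exact eSum_full _
        have h2 : eSum (tensor y c) l = ∑ i, tensor y c i := by rw [hleq]; exact eSum_full _
        rw [h1, h2, sum_tensor, sum_tensor, hz.2.1, hysum]
      · exact le_of_lt (((hmemW z hz).1 hzW) l hl1 (by omega))
    · simp only [Set.mem_preimage]
      rw [hmemW (x : Fin n → ℝ) x.2]
      intro l hl1 hl2
      exact hxS.2 l hl1 hl2

end
end

section
/- Let y ∈ V^n be a probability vector with positive components and c a vector with positive non-increasing components. Then S(y) is a proper subset of T(y,c) if and only if there exists d with 1 < d < n−1 such that y(d)⊗c' ◁ y⊗c' for every block c' of the decomposition [c]_{g_u(y)}. -/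
noncomputable section

/-! ### Auxiliary API for `eSum` -/
set_option linter.unusedSectionVars false

open Finset

section fSumAPI

variable {ι : Type*} [Fintype ι] [DecidableEq ι]

/-- Generalized `eSum` restricted to a sub-finset. -/
noncomputable def fSumOn (T : Finset ι) (f : ι → ℝ) (l : ℕ) : ℝ :=
  sSup {r | ∃ S : Finset ι, S ⊆ T ∧ S.card = l ∧ r = ∑ i ∈ S, f i}

lemma fSumOn_set_eq (T : Finset ι) (f : ι → ℝ) (l : ℕ) :
    {r | ∃ S : Finset ι, S ⊆ T ∧ S.card = l ∧ r = ∑ i ∈ S, f i}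
      = ↑((T.powersetCard l).image fun S => ∑ i ∈ S, f i) := by
  ext r
  simp only [Set.mem_setOf_eq, coe_image, Set.mem_image, mem_coe, mem_powersetCard]
  constructor
  · rintro ⟨S, h1, h2, rfl⟩; exact ⟨S, ⟨h1, h2⟩, rfl⟩
  · rintro ⟨S, ⟨h1, h2⟩, rfl⟩; exact ⟨S, h1, h2, rfl⟩

lemma sum_le_fSumOn {T S : Finset ι} (f : ι → ℝ) {l : ℕ} (hsub : S ⊆ T) (hcard : S.card = l) :
    ∑ i ∈ S, f i ≤ fSumOn T f l := by
  rw [fSumOn, fSumOn_set_eq]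
  refine le_csSup ((T.powersetCard l).image fun S => ∑ i ∈ S, f i).finite_toSet.bddAbove ?_
  simp only [coe_image, Set.mem_image, mem_coe, mem_powersetCard]
  exact ⟨S, ⟨hsub, hcard⟩, rfl⟩

lemma exists_fSumOn (T : Finset ι) (f : ι → ℝ) {l : ℕ} (hl : l ≤ T.card) :
    ∃ S : Finset ι, S ⊆ T ∧ S.card = l ∧ fSumOn T f l = ∑ i ∈ S, f i := by
  classical
  obtain ⟨S0, hS0⟩ := Finset.exists_subset_card_eq hl
  have hne : ((T.powersetCard l).image fun S => ∑ i ∈ S, f i).Nonempty :=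
    ⟨∑ i ∈ S0, f i, mem_image_of_mem _ (by simpa [mem_powersetCard] using hS0)⟩
  have : fSumOn T f l ∈ ((T.powersetCard l).image fun S => ∑ i ∈ S, f i) := by
    rw [fSumOn, fSumOn_set_eq, hne.csSup_eq_max']
    exact Finset.max'_mem _ _
  simp only [mem_image, mem_powersetCard] at this
  obtain ⟨S, ⟨h1, h2⟩, h3⟩ := this
  exact ⟨S, h1, h2, h3.symm⟩

lemma fSumOn_le {T : Finset ι} (f : ι → ℝ) {l : ℕ} (hl : l ≤ T.card) {a : ℝ}
    (h : ∀ S : Finset ι, S ⊆ T → S.card = l → ∑ i ∈ S, f i ≤ a) :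
    fSumOn T f l ≤ a := by
  obtain ⟨S, h1, h2, h3⟩ := exists_fSumOn T f hl
  rw [h3]; exact h S h1 h2

lemma fSumOn_zero (T : Finset ι) (f : ι → ℝ) : fSumOn T f 0 = 0 := by
  have h := sum_le_fSumOn (T := T) f (empty_subset T) (card_empty)
  simp only [sum_empty] at h
  refine le_antisymm (fSumOn_le f (Nat.zero_le _) ?_) h
  intro S _ hS
  rw [Finset.card_eq_zero] at hS
  simp [hS]

end fSumAPI

set_option linter.unusedSectionVars false

section fSumAPI2

variable {ι : Type*} [Fintype ι] [DecidableEq ι]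

lemma eSum_eq_fSumOn {n : ℕ} (x : Fin n → ℝ) (l : ℕ) :
    eSum x l = fSumOn Finset.univ x l := by
  unfold eSum fSumOn
  congr 1
  ext r
  simp [Finset.subset_univ]

/-- Transfer along an embedding whose image is `T`. -/
lemma fSumOn_map {κ : Type*} [Fintype κ] [DecidableEq κ] (ψ : κ ↪ ι) (f : ι → ℝ) (l : ℕ) :
    fSumOn (Finset.univ.map ψ) f l = fSumOn Finset.univ (f ∘ ψ) l := by
  unfold fSumOn
  congr 1
  ext r
  simp only [Set.mem_setOf_eq]
  constructor
  · rintro ⟨S, hsub, hcard, rfl⟩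
    rw [Finset.subset_map_iff] at hsub
    obtain ⟨u, -, rfl⟩ := hsub
    exact ⟨u, Finset.subset_univ _, by simpa using hcard,
      by rw [Finset.sum_map u ψ f]; rfl⟩
  · rintro ⟨S, -, hcard, rfl⟩
    exact ⟨S.map ψ, Finset.map_subset_map.mpr (Finset.subset_univ _),
      by simpa using hcard, (Finset.sum_map S ψ f).symm⟩

/-- Domination micro-lemma. -/
lemma sum_le_sum_of_dom (f : ι → ℝ) {U V : Finset ι} (hcard : U.card = V.card)
    (hdom : ∀ u ∈ U, ∀ v ∈ V, f u ≤ f v) : ∑ i ∈ U, f i ≤ ∑ i ∈ V, f i := by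
  rcases U.eq_empty_or_nonempty with rfl | hU
  · have hV : V = ∅ := by
      rw [← Finset.card_eq_zero]
      simpa using hcard.symm
    simp [hV]
  · obtain ⟨v0, hv0, hv0min⟩ := V.exists_min_image f (by
      rw [← Finset.card_pos, ← hcard, Finset.card_pos]; exact hU)
    calc ∑ i ∈ U, f i ≤ U.card • f v0 :=
          Finset.sum_le_card_nsmul U f (f v0) (fun u hu => hdom u hu v0 hv0)
      _ = V.card • f v0 := by rw [hcard]
      _ ≤ ∑ i ∈ V, f i := Finset.card_nsmul_le_sum V f (f v0) (fun v hv => hv0min v hv)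

end fSumAPI2

section KeyLemmas

variable {ι : Type*} [Fintype ι] [DecidableEq ι]

/-- Key lower bound: a full dominating part plus a restricted `eSum`. -/
lemma key_lower (f : ι → ℝ) {P Q : Finset ι} (hPQ : Disjoint P Q) {r : ℕ} (hr : r ≤ Q.card) :
    ∑ i ∈ P, f i + fSumOn Q f r ≤ fSumOn Finset.univ f (P.card + r) := by
  obtain ⟨S, hsub, hcard, heq⟩ := exists_fSumOn Q f hr
  rw [heq, ← Finset.sum_union (hPQ.mono_right hsub)]
  exact sum_le_fSumOn f (Finset.subset_univ _)
    (by rw [Finset.card_union_of_disjoint (hPQ.mono_right hsub), hcard])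

/-- Key upper bound: if every element of `P` dominates every element of `Q ∪ R`,
and every element of `Q` dominates every element of `R`, and `P ∪ Q ∪ R = univ`, then
`e_{|P|+r}(f) ≤ ∑_P f + e_r(f|_Q)`. -/
lemma key_upper (f : ι → ℝ) {P Q R : Finset ι}
    (hcover : ∀ i : ι, i ∈ P ∨ i ∈ Q ∨ i ∈ R)
    (hdom1 : ∀ p ∈ P, ∀ q ∈ Q, f q ≤ f p)
    (hdom2 : ∀ p ∈ P, ∀ q ∈ R, f q ≤ f p)
    (hdom3 : ∀ q ∈ Q, ∀ t ∈ R, f t ≤ f q)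
    {r : ℕ} (hr : r ≤ Q.card) (hPr : P.card + r ≤ Fintype.card ι) :
    fSumOn Finset.univ f (P.card + r) ≤ ∑ i ∈ P, f i + fSumOn Q f r := by
  refine fSumOn_le f (by simpa using hPr) ?_
  intro S _ hScard
  classical
  set A := S ∩ P with hA
  set B := (S ∩ Q) \ P with hB
  set C := ((S ∩ R) \ P) \ Q with hC
  have hSdecomp : S = A ∪ B ∪ C := by
    ext i
    simp only [hA, hB, hC, Finset.mem_union, Finset.mem_inter, Finset.mem_sdiff]
    constructor
    · intro hi
      rcases hcover i with h | h | h
      · exact Or.inl (Or.inl ⟨hi, h⟩)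
      · by_cases hp : i ∈ P
        · exact Or.inl (Or.inl ⟨hi, hp⟩)
        · exact Or.inl (Or.inr ⟨⟨hi, h⟩, hp⟩)
      · by_cases hp : i ∈ P
        · exact Or.inl (Or.inl ⟨hi, hp⟩)
        · by_cases hq : i ∈ Q
          · exact Or.inl (Or.inr ⟨⟨hi, hq⟩, hp⟩)
          · exact Or.inr ⟨⟨⟨hi, h⟩, hp⟩, hq⟩
    · rintro ((⟨h, -⟩ | ⟨⟨h, -⟩, -⟩) | ⟨⟨⟨h, -⟩, -⟩, -⟩) <;> exact h
  have hAP : A ⊆ P := Finset.inter_subset_right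
  have hBQ : B ⊆ Q := (Finset.sdiff_subset).trans Finset.inter_subset_right
  have hCR : C ⊆ R := ((Finset.sdiff_subset).trans Finset.sdiff_subset).trans
    Finset.inter_subset_right
  have hdisAB : Disjoint A B := by
    refine Finset.disjoint_left.mpr ?_
    intro i hi hiB
    simp only [hA, Finset.mem_inter] at hi
    simp only [hB, Finset.mem_sdiff] at hiB
    exact hiB.2 hi.2
  have hdisAC : Disjoint A C := by
    refine Finset.disjoint_left.mpr ?_
    intro i hi hiC
    simp only [hA, Finset.mem_inter] at hi
    simp only [hC, Finset.mem_sdiff] at hiC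
    exact hiC.1.2 hi.2
  have hdisBC : Disjoint B C := by
    refine Finset.disjoint_left.mpr ?_
    intro i hi hiC
    simp only [hB, Finset.mem_sdiff, Finset.mem_inter] at hi
    simp only [hC, Finset.mem_sdiff] at hiC
    exact hiC.2 hi.1.2
  have hdisjABC : Disjoint (A ∪ B) C := Finset.disjoint_union_left.mpr ⟨hdisAC, hdisBC⟩
  have hcardsum : A.card + B.card + C.card = P.card + r := by
    have := hScard
    rw [hSdecomp, Finset.card_union_of_disjoint hdisjABC,
      Finset.card_union_of_disjoint hdisAB] at this
    omega
  have hcardA : A.card ≤ P.card := Finset.card_le_card hAP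
  have hsplit : ∑ i ∈ S, f i = ∑ i ∈ A, f i + ∑ i ∈ B, f i + ∑ i ∈ C, f i := by
    rw [hSdecomp, Finset.sum_union hdisjABC, Finset.sum_union hdisAB]
  have hPAcard : (P \ A).card = P.card - A.card := by
    rw [Finset.card_sdiff_of_subset hAP]
  have hsumPA : ∑ i ∈ A, f i + ∑ i ∈ P \ A, f i = ∑ i ∈ P, f i := by
    rw [← Finset.sum_union (Finset.disjoint_sdiff), Finset.union_sdiff_of_subset hAP]
  by_cases hBr : r ≤ B.card
  · -- case |B| ≥ r
    obtain ⟨B0, hB0sub, hB0card⟩ := Finset.exists_subset_card_eq hBr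
    have hU : ∑ i ∈ (B \ B0) ∪ C, f i ≤ ∑ i ∈ P \ A, f i := by
      refine sum_le_sum_of_dom f ?_ ?_
      · rw [Finset.card_union_of_disjoint (hdisBC.mono_left Finset.sdiff_subset),
          Finset.card_sdiff_of_subset hB0sub, hB0card, hPAcard]
        omega
      · intro u hu v hv
        have hvP : v ∈ P := (Finset.sdiff_subset) hv
        rcases Finset.mem_union.mp hu with h | h
        · exact hdom1 v hvP u (hBQ (Finset.sdiff_subset h))
        · exact hdom2 v hvP u (hCR h)
    have hBsplit : ∑ i ∈ B, f i = ∑ i ∈ B0, f i + ∑ i ∈ B \ B0, f i := by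
      rw [← Finset.sum_union (Finset.disjoint_sdiff), Finset.union_sdiff_of_subset hB0sub]
    have hB0le : ∑ i ∈ B0, f i ≤ fSumOn Q f r :=
      sum_le_fSumOn f (hB0sub.trans hBQ) hB0card
    have hCU : ∑ i ∈ B \ B0, f i + ∑ i ∈ C, f i = ∑ i ∈ (B \ B0) ∪ C, f i := by
      rw [Finset.sum_union (hdisBC.mono_left Finset.sdiff_subset)]
    calc ∑ i ∈ S, f i
        = ∑ i ∈ A, f i + (∑ i ∈ B0, f i + (∑ i ∈ (B \ B0) ∪ C, f i)) := by
          rw [hsplit, hBsplit, ← hCU]; ring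
      _ ≤ ∑ i ∈ A, f i + (fSumOn Q f r + ∑ i ∈ P \ A, f i) := by
          gcongr
      _ = (∑ i ∈ A, f i + ∑ i ∈ P \ A, f i) + fSumOn Q f r := by ring
      _ = ∑ i ∈ P, f i + fSumOn Q f r := by rw [hsumPA]
  · -- case |B| < r : extend B inside Q
    push_neg at hBr
    obtain ⟨B1, hBB1, hB1Q, hB1card⟩ :=
      Finset.exists_subsuperset_card_eq hBQ (le_of_lt hBr) hr
    have hDcard : (B1 \ B).card = r - B.card := by
      rw [Finset.card_sdiff_of_subset hBB1, hB1card]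
    have hCcard : C.card = (P.card - A.card) + (r - B.card) := by omega
    obtain ⟨C1, hC1sub, hC1card⟩ := Finset.exists_subset_card_eq
      (show r - B.card ≤ C.card by omega)
    have hC2card : (C \ C1).card = P.card - A.card := by
      rw [Finset.card_sdiff_of_subset hC1sub, hC1card]; omega
    have hB1le : ∑ i ∈ B1, f i ≤ fSumOn Q f r := sum_le_fSumOn f hB1Q hB1card
    have hC1le : ∑ i ∈ C1, f i ≤ ∑ i ∈ B1 \ B, f i := by
      refine sum_le_sum_of_dom f (by rw [hC1card, hDcard]) ?_
      intro u hu v hv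
      exact hdom3 v (hB1Q (Finset.sdiff_subset hv)) u (hCR (hC1sub hu))
    have hC2le : ∑ i ∈ C \ C1, f i ≤ ∑ i ∈ P \ A, f i := by
      refine sum_le_sum_of_dom f (by rw [hC2card, hPAcard]) ?_
      intro u hu v hv
      exact hdom2 v (Finset.sdiff_subset hv) u (hCR (Finset.sdiff_subset hu))
    have hCsplit : ∑ i ∈ C, f i = ∑ i ∈ C1, f i + ∑ i ∈ C \ C1, f i := by
      rw [← Finset.sum_union (Finset.disjoint_sdiff), Finset.union_sdiff_of_subset hC1sub]
    have hB1split : ∑ i ∈ B1, f i = ∑ i ∈ B, f i + ∑ i ∈ B1 \ B, f i := by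
      rw [← Finset.sum_union (Finset.disjoint_sdiff), Finset.union_sdiff_of_subset hBB1]
    calc ∑ i ∈ S, f i
        = ∑ i ∈ A, f i + ∑ i ∈ B, f i + (∑ i ∈ C1, f i + ∑ i ∈ C \ C1, f i) := by
          rw [hsplit, hCsplit]
      _ ≤ ∑ i ∈ A, f i + ∑ i ∈ B, f i + (∑ i ∈ B1 \ B, f i + ∑ i ∈ P \ A, f i) := by
          gcongr
      _ = (∑ i ∈ A, f i + ∑ i ∈ P \ A, f i) + (∑ i ∈ B, f i + ∑ i ∈ B1 \ B, f i) := by ring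
      _ = ∑ i ∈ P, f i + ∑ i ∈ B1, f i := by rw [hsumPA, hB1split]
      _ ≤ ∑ i ∈ P, f i + fSumOn Q f r := by gcongr

end KeyLemmas

section FinESum

/-- the first `l` indices of `Fin n` as a finset. -/
def front (n l : ℕ) : Finset (Fin n) := Finset.univ.filter (fun a => (a : ℕ) < l)

lemma front_eq_map {n l : ℕ} (hl : l ≤ n) :
    front n l = Finset.univ.map (Fin.castLEEmb hl) := by
  ext a
  simp only [front, Finset.mem_filter, Finset.mem_univ, true_and, Finset.mem_map]
  constructor
  · intro ha
    exact ⟨⟨a, ha⟩, rfl⟩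
  · rintro ⟨t, rfl⟩
    exact t.isLt

lemma card_front {n l : ℕ} (hl : l ≤ n) : (front n l).card = l := by
  rw [front_eq_map hl, Finset.card_map, Finset.card_univ, Fintype.card_fin]

lemma sum_front {n l : ℕ} (hl : l ≤ n) (x : Fin n → ℝ) :
    ∑ a ∈ front n l, x a = ∑ t : Fin l, x ⟨t, lt_of_lt_of_le t.isLt hl⟩ := by
  rw [front_eq_map hl, Finset.sum_map]
  rfl

lemma fin_strictMono_le {l n : ℕ} {f : Fin l → Fin n} (hf : StrictMono f) :
    ∀ v : ℕ, ∀ h : v < l, v ≤ (f ⟨v, h⟩ : ℕ) := by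
  intro v
  induction v with
  | zero => intro h; exact Nat.zero_le _
  | succ v ih =>
    intro h
    have h' : v < l := Nat.lt_of_succ_lt h
    have hlt : f ⟨v, h'⟩ < f ⟨v + 1, h⟩ := hf (by simp [Fin.lt_def])
    have := ih h'
    have := Fin.lt_def.mp hlt
    omega

/-- For an antitone vector, any `l`-subset sum is at most the sum of the first `l` entries. -/
lemma sum_le_sum_front {n l : ℕ} {x : Fin n → ℝ} (hx : Antitone x) {S : Finset (Fin n)}
    (hS : S.card = l) (hl : l ≤ n) : ∑ i ∈ S, x i ≤ ∑ a ∈ front n l, x a := by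
  classical
  have hmap : Finset.univ.map (S.orderEmbOfFin hS).toEmbedding = S := by
    ext a
    simp only [Finset.mem_map, Finset.mem_univ, true_and, RelEmbedding.coe_toEmbedding]
    constructor
    · rintro ⟨t, rfl⟩; exact Finset.orderEmbOfFin_mem S hS t
    · intro ha
      have : a ∈ Set.range (S.orderEmbOfFin hS) := by
        rw [Finset.range_orderEmbOfFin]; exact ha
      obtain ⟨t, ht⟩ := this
      exact ⟨t, ht⟩
  rw [← hmap, Finset.sum_map, sum_front hl]
  refine Finset.sum_le_sum ?_
  intro t _
  refine hx ?_
  rw [Fin.le_def]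
  exact fin_strictMono_le (S.orderEmbOfFin hS).strictMono t t.isLt

lemma eSum_antitone {n l : ℕ} {x : Fin n → ℝ} (hx : Antitone x) (hl : l ≤ n) :
    eSum x l = ∑ a ∈ front n l, x a := by
  rw [eSum_eq_fSumOn]
  refine le_antisymm ?_ ?_
  · refine fSumOn_le x (by simpa using hl) ?_
    intro S _ hS
    exact sum_le_sum_front hx hS hl
  · exact sum_le_fSumOn x (Finset.subset_univ _) (card_front hl)

lemma eSum_zero {n : ℕ} (x : Fin n → ℝ) : eSum x 0 = 0 := by
  rw [eSum_eq_fSumOn]; exact fSumOn_zero _ _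

lemma eSum_full {n : ℕ} (x : Fin n → ℝ) : eSum x n = ∑ i, x i := by
  rw [eSum_eq_fSumOn]
  refine le_antisymm ?_ ?_
  · refine fSumOn_le x (by simp) ?_
    intro S _ hS
    have : S = Finset.univ := Finset.eq_univ_of_card S (by simpa using hS)
    rw [this]
  · exact sum_le_fSumOn x (Finset.subset_univ _) (by simp)

lemma le_eSum_one {n : ℕ} (x : Fin n → ℝ) (t : Fin n) : x t ≤ eSum x 1 := by
  rw [eSum_eq_fSumOn]
  simpa using sum_le_fSumOn x (Finset.subset_univ {t}) (Finset.card_singleton t)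

lemma eSum_one_le {n : ℕ} (x : Fin n → ℝ) (hn : 1 ≤ n) {a : ℝ} (h : ∀ t, x t ≤ a) :
    eSum x 1 ≤ a := by
  rw [eSum_eq_fSumOn]
  refine fSumOn_le x (by simpa using hn) ?_
  intro S _ hS
  obtain ⟨t, rfl⟩ := Finset.card_eq_one.mp hS
  simpa using h t

lemma le_eSum_pred {n : ℕ} (x : Fin n → ℝ) (t : Fin n) :
    ∑ i, x i - x t ≤ eSum x (n - 1) := by
  rw [eSum_eq_fSumOn]
  have h := sum_le_fSumOn x (Finset.subset_univ (Finset.univ.erase t))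
    (by rw [Finset.card_erase_of_mem (Finset.mem_univ t), Finset.card_univ, Fintype.card_fin])
  rwa [Finset.sum_erase_eq_sub (Finset.mem_univ t)] at h

lemma eSum_pred_le {n : ℕ} (x : Fin n → ℝ) (hn : 1 ≤ n) {m : ℝ} (h : ∀ t, m ≤ x t) :
    eSum x (n - 1) ≤ ∑ i, x i - m := by
  rw [eSum_eq_fSumOn]
  refine fSumOn_le x (by rw [Finset.card_univ, Fintype.card_fin]; omega) ?_
  intro S _ hS
  have hne : S ≠ Finset.univ := by
    intro hS'
    rw [hS', Finset.card_univ, Fintype.card_fin] at hS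
    omega
  obtain ⟨t, ht⟩ : ∃ t, t ∉ S := by
    by_contra hcon
    push_neg at hcon
    exact hne (Finset.eq_univ_iff_forall.mpr hcon)
  have hSsub : S ⊆ Finset.univ.erase t := fun a ha =>
    Finset.mem_erase.mpr ⟨fun he => ht (he ▸ ha), Finset.mem_univ a⟩
  have hSeq : S = Finset.univ.erase t := Finset.eq_of_subset_of_card_le hSsub
    (by rw [Finset.card_erase_of_mem (Finset.mem_univ t), Finset.card_univ, Fintype.card_fin]; omega)
  rw [hSeq, Finset.sum_erase_eq_sub (Finset.mem_univ t)]
  have := h t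
  linarith

end FinESum

section PairWorld

variable {n k : ℕ}

/-- The tensor product as a function on pairs. -/
def pairf (z : Fin n → ℝ) (w : Fin k → ℝ) : Fin n × Fin k → ℝ := fun p => z p.1 * w p.2

lemma fSumOn_equiv {ι κ : Type*} [Fintype ι] [DecidableEq ι] [Fintype κ] [DecidableEq κ]
    (e : κ ≃ ι) (f : ι → ℝ) (l : ℕ) :
    fSumOn Finset.univ f l = fSumOn Finset.univ (f ∘ e) l := by
  have h := fSumOn_map e.toEmbedding f l
  rw [Finset.map_univ_equiv e] at h
  rw [h]
  rfl

lemma eSum_tensor (z : Fin n → ℝ) (w : Fin k → ℝ) (l : ℕ) :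
    eSum (tensor z w) l = fSumOn Finset.univ (pairf z w) l := by
  rw [eSum_eq_fSumOn, fSumOn_equiv finProdFinEquiv (tensor z w) l]
  congr 1
  ext p
  simp [tensor, pairf, Equiv.symm_apply_apply]

lemma sum_tensor (z : Fin n → ℝ) (w : Fin k → ℝ) :
    ∑ i, tensor z w i = (∑ a, z a) * (∑ b, w b) := by
  rw [← Equiv.sum_comp finProdFinEquiv (tensor z w)]
  have : ∀ p : Fin n × Fin k, tensor z w (finProdFinEquiv p) = z p.1 * w p.2 := by
    intro p; simp [tensor, Equiv.symm_apply_apply]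
  rw [Fintype.sum_prod_type]
  simp only [this]
  rw [Finset.sum_mul_sum]

/-- Grouping upper bound: any pair-set sum is bounded by a column mixture of `eSum`s. -/
lemma pair_sum_le (z : Fin n → ℝ) (w : Fin k → ℝ) (hw : ∀ b, 0 ≤ w b)
    (S : Finset (Fin n × Fin k)) :
    ∃ l : Fin k → ℕ, (∀ b, l b ≤ n) ∧ (∑ b, l b = S.card) ∧
      ∑ p ∈ S, pairf z w p ≤ ∑ b, w b * eSum z (l b) := by
  classical
  refine ⟨fun b => (S.filter (fun p => p.2 = b)).card, ?_, ?_, ?_⟩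
  · intro b
    have hinj : Set.InjOn Prod.fst ((S.filter (fun p => p.2 = b) : Finset (Fin n × Fin k)) : Set (Fin n × Fin k)) := by
      intro p hp q hq hfst
      simp only [Finset.coe_filter, Set.mem_setOf_eq] at hp hq
      exact Prod.ext hfst (hp.2.trans hq.2.symm)
    calc (S.filter (fun p => p.2 = b)).card
        = ((S.filter (fun p => p.2 = b)).image Prod.fst).card :=
          (Finset.card_image_of_injOn hinj).symm
      _ ≤ Fintype.card (Fin n) := Finset.card_le_univ _
      _ = n := Fintype.card_fin n
  · exact (Finset.card_eq_sum_card_fiberwise (fun p _ => Finset.mem_univ p.2)).symm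
  · rw [← Finset.sum_fiberwise_of_maps_to (fun p _ => Finset.mem_univ p.2) (pairf z w)]
    refine Finset.sum_le_sum ?_
    intro b _
    have hinj : Set.InjOn Prod.fst ((S.filter (fun p => p.2 = b) : Finset (Fin n × Fin k)) : Set (Fin n × Fin k)) := by
      intro p hp q hq hfst
      simp only [Finset.coe_filter, Set.mem_setOf_eq] at hp hq
      exact Prod.ext hfst (hp.2.trans hq.2.symm)
    have h1 : ∑ p ∈ S.filter (fun p => p.2 = b), pairf z w p
        = w b * ∑ a ∈ (S.filter (fun p => p.2 = b)).image Prod.fst, z a := by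
      rw [Finset.sum_image hinj, Finset.mul_sum]
      refine Finset.sum_congr rfl ?_
      intro p hp
      have : p.2 = b := (Finset.mem_filter.mp hp).2
      simp [pairf, this, mul_comm]
    rw [h1]
    refine mul_le_mul_of_nonneg_left ?_ (hw b)
    rw [eSum_eq_fSumOn]
    exact sum_le_fSumOn z (Finset.subset_univ _) (Finset.card_image_of_injOn hinj)

/-- Grouping lower bound: a column mixture of `eSum`s is attained by some pair-set. -/
lemma pair_sum_ge (z : Fin n → ℝ) (w : Fin k → ℝ) (hw : ∀ b, 0 ≤ w b)
    (l : Fin k → ℕ) (hl : ∀ b, l b ≤ n) :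
    ∑ b, w b * eSum z (l b) ≤ fSumOn Finset.univ (pairf z w) (∑ b, l b) := by
  classical
  have hex : ∀ b : Fin k, ∃ s : Finset (Fin n), s.card = l b ∧ eSum z (l b) = ∑ a ∈ s, z a := by
    intro b
    rw [eSum_eq_fSumOn]
    obtain ⟨s, -, h2, h3⟩ := exists_fSumOn Finset.univ z (l := l b) (by
      rw [Finset.card_univ, Fintype.card_fin]; exact hl b)
    exact ⟨s, h2, h3⟩
  choose s hscard hseq using hex
  set S : Finset (Fin n × Fin k) :=
    Finset.univ.biUnion (fun b => (s b).image (fun a => (a, b))) with hS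
  have hdisj : ∀ b1 ∈ (Finset.univ : Finset (Fin k)), ∀ b2 ∈ Finset.univ, b1 ≠ b2 →
      Disjoint ((s b1).image (fun a => (a, b1))) ((s b2).image (fun a => (a, b2))) := by
    intro b1 _ b2 _ hne
    refine Finset.disjoint_left.mpr ?_
    intro p hp1 hp2
    simp only [Finset.mem_image] at hp1 hp2
    obtain ⟨a1, -, rfl⟩ := hp1
    obtain ⟨a2, -, heq⟩ := hp2
    have hb : b2 = b1 := congrArg Prod.snd heq
    exact hne hb.symm
  have hinj : ∀ b : Fin k, ∀ x ∈ s b, ∀ y ∈ s b,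
      (x, b) = (y, b) → x = y := by
    intro b x _ y _ h
    exact congrArg Prod.fst h
  have hcard : S.card = ∑ b, l b := by
    rw [hS, Finset.card_biUnion hdisj]
    refine Finset.sum_congr rfl ?_
    intro b _
    rw [Finset.card_image_of_injective _ (fun x y h => congrArg Prod.fst h), hscard]
  have hsum : ∑ p ∈ S, pairf z w p = ∑ b, w b * eSum z (l b) := by
    rw [hS, Finset.sum_biUnion hdisj]
    refine Finset.sum_congr rfl ?_
    intro b _
    rw [Finset.sum_image (hinj b), hseq b, Finset.mul_sum]
    refine Finset.sum_congr rfl ?_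
    intro a _
    simp [pairf, mul_comm]
  rw [← hsum, ← hcard]
  exact sum_le_fSumOn _ (Finset.subset_univ S) rfl

/-- Tensoring preserves majorization. -/
lemma maj_tensor {x y : Fin n → ℝ} (hxy : Maj x y) (w : Fin k → ℝ) (hw : ∀ b, 0 ≤ w b) :
    Maj (tensor x w) (tensor y w) := by
  constructor
  · rw [sum_tensor, sum_tensor, hxy.1]
  · intro L hL1 hLnk
    rw [eSum_tensor, eSum_tensor]
    refine fSumOn_le (pairf x w) (by simpa using hLnk) ?_
    intro S _ hScard
    obtain ⟨l, hl, hlsum, hle⟩ := pair_sum_le x w hw S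
    calc ∑ p ∈ S, pairf x w p ≤ ∑ b, w b * eSum x (l b) := hle
      _ ≤ ∑ b, w b * eSum y (l b) := by
          refine Finset.sum_le_sum ?_
          intro b _
          refine mul_le_mul_of_nonneg_left ?_ (hw b)
          rcases Nat.eq_zero_or_pos (l b) with h0 | hpos
          · rw [h0, eSum_zero, eSum_zero]
          · exact hxy.2 (l b) hpos (hl b)
      _ ≤ fSumOn Finset.univ (pairf y w) (∑ b, l b) := pair_sum_ge y w hw l hl
      _ = fSumOn Finset.univ (pairf y w) L := by rw [hlsum, hScard]

end PairWorld

section ColsSection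

variable {n k : ℕ}

/-- Pairs whose column index is `< i`. -/
def colsLT (n k : ℕ) (i : ℕ) : Finset (Fin n × Fin k) :=
  Finset.univ.filter (fun p => (p.2 : ℕ) < i)

/-- Pairs whose column index is in `[i, j]`. -/
def colsIn (n k : ℕ) (i j : ℕ) : Finset (Fin n × Fin k) :=
  Finset.univ.filter (fun p => i ≤ (p.2 : ℕ) ∧ (p.2 : ℕ) ≤ j)

/-- Pairs whose column index is `> j`. -/
def colsGT (n k : ℕ) (j : ℕ) : Finset (Fin n × Fin k) :=
  Finset.univ.filter (fun p => j < (p.2 : ℕ))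

lemma colsLT_eq (i : ℕ) : colsLT n k i = Finset.univ ×ˢ front k i := by
  ext p
  simp [colsLT, front, Finset.mem_product]

lemma card_colsLT {i : ℕ} (hi : i ≤ k) : (colsLT n k i).card = n * i := by
  rw [colsLT_eq, Finset.card_product, Finset.card_univ, Fintype.card_fin, card_front hi]

lemma colsIn_eq (i j : ℕ) : colsIn n k i j
    = Finset.univ ×ˢ (Finset.univ.filter (fun b : Fin k => i ≤ (b : ℕ) ∧ (b : ℕ) ≤ j)) := by
  ext p
  simp [colsIn, Finset.mem_product]

lemma card_colsIn {i j : ℕ} (hij : i ≤ j) (hj : j < k) :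
    (colsIn n k i j).card = n * (j - i + 1) := by
  rw [colsIn_eq, Finset.card_product, Finset.card_univ, Fintype.card_fin]
  congr 1
  have heq : (Finset.univ.filter (fun b : Fin k => i ≤ (b : ℕ) ∧ (b : ℕ) ≤ j))
      = front k (j + 1) \ front k i := by
    ext b
    simp only [Finset.mem_filter, Finset.mem_univ, true_and, front, Finset.mem_sdiff]
    omega
  rw [heq, Finset.card_sdiff_of_subset (by
    intro b hb
    simp only [front, Finset.mem_filter, Finset.mem_univ, true_and] at hb ⊢
    omega), card_front (by omega : j + 1 ≤ k), card_front (by omega : i ≤ k)]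
  omega

lemma sum_colsLT (z : Fin n → ℝ) (c : Fin k → ℝ) (i : ℕ) :
    ∑ p ∈ colsLT n k i, pairf z c p = (∑ a, z a) * (∑ b ∈ front k i, c b) := by
  rw [colsLT_eq, Finset.sum_product, Finset.sum_mul_sum]
  rfl

lemma disj_colsLT_colsIn (i j : ℕ) : Disjoint (colsLT n k i) (colsIn n k i j) := by
  refine Finset.disjoint_left.mpr ?_
  intro p hp hq
  simp only [colsLT, colsIn, Finset.mem_filter, Finset.mem_univ, true_and] at hp hq
  omega

lemma fSumOn_colsIn (z : Fin n → ℝ) (c : Fin k → ℝ) {i j : ℕ} (hij : i ≤ j) (hj : j < k)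
    (r : ℕ) : fSumOn (colsIn n k i j) (pairf z c) r = eSum (tensor z (seg c i j hij hj)) r := by
  rw [eSum_tensor]
  have hinj : Function.Injective
      (fun p : Fin n × Fin (j - i + 1) => ((p.1, ⟨i + (p.2 : ℕ), by have := p.2.isLt; omega⟩)
        : Fin n × Fin k)) := by
    intro p q h
    simp only [Prod.mk.injEq, Fin.mk.injEq] at h
    exact Prod.ext h.1 (Fin.ext (by omega))
  set ψ : Fin n × Fin (j - i + 1) ↪ Fin n × Fin k :=
    ⟨fun p => (p.1, ⟨i + (p.2 : ℕ), by have := p.2.isLt; omega⟩), hinj⟩ with hψ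
  have hmap : Finset.univ.map ψ = colsIn n k i j := by
    ext p
    simp only [Finset.mem_map, Finset.mem_univ, true_and, colsIn, Finset.mem_filter, hψ,
      Function.Embedding.coeFn_mk]
    constructor
    · rintro ⟨q, rfl⟩
      have := q.2.isLt
      constructor
      · exact Nat.le_add_right i q.2
      · simp only []
        omega
    · rintro ⟨h1, h2⟩
      refine ⟨(p.1, ⟨(p.2 : ℕ) - i, by omega⟩), ?_⟩
      refine Prod.ext rfl (Fin.ext ?_)
      simp only []
      omega
  rw [← hmap, fSumOn_map]
  rfl

lemma split_lower (z : Fin n → ℝ) (c : Fin k → ℝ) {i j : ℕ} (hij : i ≤ j) (hj : j < k)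
    {r : ℕ} (hr : r ≤ n * (j - i + 1)) :
    (∑ a, z a) * (∑ b ∈ front k i, c b) + eSum (tensor z (seg c i j hij hj)) r
      ≤ eSum (tensor z c) (n * i + r) := by
  rw [eSum_tensor z c, ← sum_colsLT, ← fSumOn_colsIn z c hij hj,
    ← card_colsLT (n := n) (show i ≤ k by omega)]
  exact key_lower (pairf z c) (disj_colsLT_colsIn i j)
    (by rw [card_colsIn hij hj]; exact hr)

lemma split_upper {z : Fin n → ℝ} (hn : 0 < n) (hz : Antitone z) (hz0 : ∀ a, 0 ≤ z a)
    {c : Fin k → ℝ} (hc : Antitone c) (hc0 : ∀ b, 0 ≤ c b) {i j : ℕ} (hij : i ≤ j) (hj : j < k)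
    (hsepL : ∀ hi : 0 < i, z ⟨0, hn⟩ * c ⟨i, by omega⟩
      ≤ z ⟨n - 1, by omega⟩ * c ⟨i - 1, by omega⟩)
    (hsepR : ∀ hj1 : j + 1 < k, z ⟨0, hn⟩ * c ⟨j + 1, hj1⟩
      ≤ z ⟨n - 1, by omega⟩ * c ⟨j, hj⟩)
    {r : ℕ} (hr : r ≤ n * (j - i + 1)) :
    eSum (tensor z c) (n * i + r)
      ≤ (∑ a, z a) * (∑ b ∈ front k i, c b) + eSum (tensor z (seg c i j hij hj)) r := by
  rw [eSum_tensor z c, ← sum_colsLT, ← fSumOn_colsIn z c hij hj,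
    ← card_colsLT (n := n) (show i ≤ k by omega)]
  have hzbot : ∀ a : Fin n, z ⟨n - 1, by omega⟩ ≤ z a := fun a => hz (by
    rw [Fin.le_def]; simp only []; have := a.isLt; omega)
  have hztop : ∀ a : Fin n, z a ≤ z ⟨0, hn⟩ := fun a => hz (by
    rw [Fin.le_def]; simp only []; omega)
  have hgen : ∀ p q : Fin n × Fin k, (q.2 : ℕ) < i → i ≤ (p.2 : ℕ) →
      pairf z c p ≤ pairf z c q := by
    intro p q hq hp
    have hi : 0 < i := by omega
    calc pairf z c p = z p.1 * c p.2 := rfl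
      _ ≤ z ⟨0, hn⟩ * c ⟨i, by omega⟩ := by
          refine mul_le_mul (hztop _) (hc ?_) (hc0 _) (hz0 _)
          rw [Fin.le_def]; simp only []; omega
      _ ≤ z ⟨n - 1, by omega⟩ * c ⟨i - 1, by omega⟩ := hsepL hi
      _ ≤ z q.1 * c q.2 := by
          refine mul_le_mul (hzbot _) (hc ?_) (hc0 _) (hz0 _)
          rw [Fin.le_def]; simp only []; omega
      _ = pairf z c q := rfl
  have hgen2 : ∀ p q : Fin n × Fin k, (q.2 : ℕ) ≤ j → j < (p.2 : ℕ) →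
      pairf z c p ≤ pairf z c q := by
    intro p q hq hp
    have hj1 : j + 1 < k := by have := p.2.isLt; omega
    calc pairf z c p = z p.1 * c p.2 := rfl
      _ ≤ z ⟨0, hn⟩ * c ⟨j + 1, hj1⟩ := by
          refine mul_le_mul (hztop _) (hc ?_) (hc0 _) (hz0 _)
          rw [Fin.le_def]; simp only []; omega
      _ ≤ z ⟨n - 1, by omega⟩ * c ⟨j, hj⟩ := hsepR hj1
      _ ≤ z q.1 * c q.2 := by
          refine mul_le_mul (hzbot _) (hc ?_) (hc0 _) (hz0 _)
          rw [Fin.le_def]; simp only []; omega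
      _ = pairf z c q := rfl
  refine key_upper (pairf z c) (P := colsLT n k i) (Q := colsIn n k i j) (R := colsGT n k j)
    ?_ ?_ ?_ ?_ ?_ ?_
  · intro p
    simp only [colsLT, colsIn, colsGT, Finset.mem_filter, Finset.mem_univ, true_and]
    omega
  · intro p hp q hq
    simp only [colsLT, colsIn, Finset.mem_filter, Finset.mem_univ, true_and] at hp hq
    exact hgen q p hp hq.1
  · intro p hp q hq
    simp only [colsLT, colsGT, Finset.mem_filter, Finset.mem_univ, true_and] at hp hq
    exact hgen q p hp (by omega)
  · intro p hp q hq
    simp only [colsIn, colsGT, Finset.mem_filter, Finset.mem_univ, true_and] at hp hq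
    exact hgen2 q p hp.2 hq
  · rw [card_colsIn hij hj]; exact hr
  · rw [card_colsLT (show i ≤ k by omega), Fintype.card_prod, Fintype.card_fin, Fintype.card_fin]
    have : i + (j - i + 1) ≤ k := by omega
    calc n * i + r ≤ n * i + n * (j - i + 1) := by omega
      _ = n * (i + (j - i + 1)) := by ring
      _ ≤ n * k := Nat.mul_le_mul_left n this

end ColsSection

section Averaging

variable {n : ℕ}

/-- Indices in the window `[a, b)`. -/
def win (n a b : ℕ) : Finset (Fin n) := Finset.univ.filter (fun t => a ≤ (t : ℕ) ∧ (t : ℕ) < b)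

lemma win_eq (a b : ℕ) : win n a b = front n b \ front n a := by
  ext t
  simp only [win, front, Finset.mem_filter, Finset.mem_univ, true_and, Finset.mem_sdiff]
  omega

lemma card_win {a b : ℕ} (hab : a ≤ b) (hb : b ≤ n) : (win n a b).card = b - a := by
  rw [win_eq, Finset.card_sdiff_of_subset (by
    intro t ht
    simp only [front, Finset.mem_filter, Finset.mem_univ, true_and] at ht ⊢
    omega), card_front hb, card_front (le_trans hab hb)]

lemma front_split {a b : ℕ} (hab : a ≤ b) (x : Fin n → ℝ) :
    ∑ t ∈ front n b, x t = ∑ t ∈ front n a, x t + ∑ t ∈ win n a b, x t := by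
  rw [win_eq, add_comm, Finset.sum_sdiff (by
    intro t ht
    simp only [front, Finset.mem_filter, Finset.mem_univ, true_and] at ht ⊢
    omega : front n a ⊆ front n b)]

lemma win_last {a : ℕ} (ha : a ≤ n) : win n a n = Finset.univ \ front n a := by
  rw [win_eq]
  congr 1
  ext t
  simp only [front, Finset.mem_filter, Finset.mem_univ, true_and, iff_true]
  exact t.isLt

lemma sum_win_last {a : ℕ} (ha : a ≤ n) (x : Fin n → ℝ) :
    ∑ t ∈ win n a n, x t = ∑ t, x t - ∑ t ∈ front n a, x t := by
  have := front_split ha x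
  rw [show front n n = Finset.univ by
    ext t; simp only [front, Finset.mem_filter, Finset.mem_univ, true_and, iff_true]
    exact t.isLt] at this
  linarith

/-- Averaging inequality for antitone vectors:
`(c-b) * ∑_{[a,b)} z ≥ (b-a) * ∑_{[b,c)} z`. -/
lemma avg_ineq {z : Fin n → ℝ} (hz : Antitone z) {a b c : ℕ} (hab : a ≤ b) (hbc : b ≤ c)
    (hc : c ≤ n) :
    ((b - a : ℕ) : ℝ) * ∑ t ∈ win n b c, z t ≤ ((c - b : ℕ) : ℝ) * ∑ t ∈ win n a b, z t := by
  have key : ∀ u ∈ win n b c, ∀ t ∈ win n a b, z u ≤ z t := by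
    intro u hu t ht
    simp only [win, Finset.mem_filter, Finset.mem_univ, true_and] at hu ht
    exact hz (by rw [Fin.le_def]; omega)
  calc ((b - a : ℕ) : ℝ) * ∑ u ∈ win n b c, z u
      = ∑ u ∈ win n b c, ∑ t ∈ win n a b, z u := by
        rw [Finset.mul_sum]
        refine Finset.sum_congr rfl ?_
        intro u _
        rw [Finset.sum_const, nsmul_eq_mul, card_win hab (le_trans hbc hc)]
    _ ≤ ∑ u ∈ win n b c, ∑ t ∈ win n a b, z t := by
        refine Finset.sum_le_sum ?_
        intro u hu
        exact Finset.sum_le_sum (fun t ht => key u hu t ht)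
    _ = ((c - b : ℕ) : ℝ) * ∑ t ∈ win n a b, z t := by
        rw [Finset.sum_const, nsmul_eq_mul, card_win hbc hc]

end Averaging

section YvecFacts

variable {n : ℕ} {y : Fin n → ℝ} {d : ℕ}

lemma yvec_apply (a : Fin n) :
    yvec y d a = if (a : ℕ) < d then eSum y d / (d : ℝ)
      else (1 - eSum y d) / ((n : ℝ) - (d : ℝ)) := rfl

/-- In the setting `y ∈ Vn n`, `1 < d`, `d+1 < n`. -/
lemma eSum_y_pos (hypos : ∀ i, 0 < y i) (hyanti : Antitone y) (hd1 : 0 < d) (hdn : d ≤ n) :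
    0 < eSum y d := by
  rw [eSum_antitone hyanti hdn]
  refine Finset.sum_pos (fun i _ => hypos i) ?_
  rw [← Finset.card_pos, card_front hdn]
  exact hd1

lemma eSum_y_lt_one (hypos : ∀ i, 0 < y i) (hyanti : Antitone y) (hysum : ∑ i, y i = 1)
    (hdn : d < n) : eSum y d < 1 := by
  rw [eSum_antitone hyanti (le_of_lt hdn), ← hysum]
  refine Finset.sum_lt_sum_of_subset (Finset.subset_univ _) (i := ⟨d, hdn⟩) (Finset.mem_univ _)
    ?_ (hypos _) (fun j _ _ => le_of_lt (hypos j))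
  simp [front]

lemma v_le_u (hyanti : Antitone y) (hysum : ∑ i, y i = 1) (hd1 : 0 < d) (hdn : d < n) :
    (1 - eSum y d) / ((n : ℝ) - (d : ℝ)) ≤ eSum y d / (d : ℝ) := by
  have h := avg_ineq hyanti (Nat.zero_le d) (le_of_lt hdn) (le_refl n)
  rw [sum_win_last (le_of_lt hdn), hysum] at h
  have hwin0 : win n 0 d = front n d := by
    ext t; simp [win, front]
  rw [hwin0, ← eSum_antitone hyanti (le_of_lt hdn)] at h
  have hd0 : (0:ℝ) < (d:ℝ) := by exact_mod_cast hd1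
  have hnd : (0:ℝ) < (n:ℝ) - (d:ℝ) := by
    have : (d:ℝ) < (n:ℝ) := by exact_mod_cast hdn
    linarith
  rw [div_le_div_iff₀ hnd hd0]
  have h1 : ((d - 0 : ℕ) : ℝ) = (d : ℝ) := by norm_num
  have h2 : ((n - d : ℕ) : ℝ) = (n : ℝ) - (d : ℝ) := by
    rw [Nat.cast_sub (le_of_lt hdn)]
  rw [h1, h2] at h
  linarith

lemma yvec_antitone (hyanti : Antitone y) (hysum : ∑ i, y i = 1) (hd1 : 0 < d) (hdn : d < n) :
    Antitone (yvec y d) := by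
  intro a b hab
  rw [yvec_apply, yvec_apply]
  have huv := v_le_u hyanti hysum hd1 hdn
  by_cases ha : (a : ℕ) < d <;> by_cases hb : (b : ℕ) < d <;>
    simp only [ha, hb, if_true, if_false, ite_true, ite_false]
  · exact le_refl _
  · exact huv
  · exact absurd (lt_of_le_of_lt (Fin.le_def.mp hab) hb) ha
  · exact le_refl _

lemma yvec_nonneg (hypos : ∀ i, 0 < y i) (hyanti : Antitone y) (hysum : ∑ i, y i = 1)
    (hd1 : 0 < d) (hdn : d < n) : ∀ a, 0 ≤ yvec y d a := by
  intro a
  rw [yvec_apply]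
  have h1 := eSum_y_pos hypos hyanti hd1 (le_of_lt hdn)
  have h2 := eSum_y_lt_one hypos hyanti hysum hdn
  have hd0 : (0:ℝ) < (d:ℝ) := by exact_mod_cast hd1
  have hnd : (0:ℝ) < (n:ℝ) - (d:ℝ) := by
    have : (d:ℝ) < (n:ℝ) := by exact_mod_cast hdn
    linarith
  split
  · positivity
  · have : 0 < 1 - eSum y d := by linarith
    positivity

lemma sum_yvec (hd1 : 0 < d) (hdn : d < n) : ∑ a, yvec y d a = 1 := by
  have hfr : front n n = (Finset.univ : Finset (Fin n)) := by
    ext t; simp only [front, Finset.mem_filter, Finset.mem_univ, true_and, iff_true]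
    exact t.isLt
  rw [← hfr, front_split (le_of_lt hdn) (yvec y d)]
  have hd0 : (d:ℝ) ≠ 0 := by
    have : (0:ℝ) < (d:ℝ) := by exact_mod_cast hd1
    linarith
  have hnd : (n:ℝ) - (d:ℝ) ≠ 0 := by
    have : (d:ℝ) < (n:ℝ) := by exact_mod_cast hdn
    linarith
  have h1 : ∑ a ∈ front n d, yvec y d a = eSum y d := by
    have hcong : ∀ a ∈ front n d, yvec y d a = eSum y d / (d : ℝ) := by
      intro a ha
      rw [yvec_apply, if_pos]
      simp only [front, Finset.mem_filter] at ha
      exact ha.2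
    rw [Finset.sum_congr rfl hcong, Finset.sum_const, card_front (le_of_lt hdn), nsmul_eq_mul]
    field_simp
  have h2 : ∑ a ∈ win n d n, yvec y d a = 1 - eSum y d := by
    have hcong : ∀ a ∈ win n d n, yvec y d a = (1 - eSum y d) / ((n:ℝ) - (d:ℝ)) := by
      intro a ha
      rw [yvec_apply, if_neg]
      simp only [win, Finset.mem_filter] at ha
      omega
    rw [Finset.sum_congr rfl hcong, Finset.sum_const, card_win (le_of_lt hdn) le_rfl,
      nsmul_eq_mul, Nat.cast_sub (le_of_lt hdn)]
    field_simp
  rw [h1, h2]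
  ring

lemma eSum_yvec (hyanti : Antitone y) (hysum : ∑ i, y i = 1) (hd1 : 0 < d) (hdn : d < n)
    {l : ℕ} (hl : l ≤ n) :
    eSum (yvec y d) l = ((min l d : ℕ) : ℝ) * (eSum y d / (d : ℝ))
      + ((l - d : ℕ) : ℝ) * ((1 - eSum y d) / ((n : ℝ) - (d : ℝ))) := by
  rw [eSum_antitone (yvec_antitone hyanti hysum hd1 hdn) hl]
  have hsplit : front n l = (front n (min l d)) ∪ win n d l := by
    ext t
    simp only [front, win, Finset.mem_filter, Finset.mem_univ, true_and, Finset.mem_union]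
    omega
  have hdisj : Disjoint (front n (min l d)) (win n d l) := by
    refine Finset.disjoint_left.mpr ?_
    intro t ht1 ht2
    simp only [front, win, Finset.mem_filter, Finset.mem_univ, true_and] at ht1 ht2
    omega
  rw [hsplit, Finset.sum_union hdisj]
  have h1 : ∑ a ∈ front n (min l d), yvec y d a
      = ((min l d : ℕ) : ℝ) * (eSum y d / (d : ℝ)) := by
    have hcong : ∀ a ∈ front n (min l d), yvec y d a = eSum y d / (d : ℝ) := by
      intro a ha
      rw [yvec_apply, if_pos]
      simp only [front, Finset.mem_filter] at ha
      omega
    rw [Finset.sum_congr rfl hcong, Finset.sum_const,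
      card_front (by omega : min l d ≤ n), nsmul_eq_mul]
  have h2 : ∑ a ∈ win n d l, yvec y d a
      = ((l - d : ℕ) : ℝ) * ((1 - eSum y d) / ((n : ℝ) - (d : ℝ))) := by
    rcases le_or_gt d l with hdl | hdl
    · have hcong : ∀ a ∈ win n d l, yvec y d a = (1 - eSum y d) / ((n:ℝ) - (d:ℝ)) := by
        intro a ha
        rw [yvec_apply, if_neg]
        simp only [win, Finset.mem_filter] at ha
        omega
      rw [Finset.sum_congr rfl hcong, Finset.sum_const, card_win hdl hl, nsmul_eq_mul]
    · have : win n d l = ∅ := by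
        ext t
        simp only [win, Finset.mem_filter, Finset.mem_univ, true_and, Finset.notMem_empty,
          iff_false]
        omega
      rw [this, Finset.sum_empty, Nat.sub_eq_zero_of_le (le_of_lt hdl)]
      simp
  rw [h1, h2]

end YvecFacts

section Concavity

variable {n : ℕ} {y : Fin n → ℝ} {d : ℕ}

/-- `x` strictly beats `y(d)` in every nontrivial `eSum`, as soon as `e_d(x) > e_d(y)`. -/
lemma eSum_yvec_lt (hyanti : Antitone y) (hysum : ∑ i, y i = 1)
    (hd1 : 0 < d) (hdn : d < n) {x : Fin n → ℝ} (hxanti : Antitone x)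
    (hxsum : ∑ i, x i = 1) (hdx : eSum y d < eSum x d) {l : ℕ} (hl1 : 1 ≤ l) (hln : l < n) :
    eSum (yvec y d) l < eSum x l := by
  have hD : (0:ℝ) < (d:ℝ) := by exact_mod_cast hd1
  have hdnR : (d:ℝ) < (n:ℝ) := by exact_mod_cast hdn
  have hND : (0:ℝ) < (n:ℝ) - (d:ℝ) := by linarith
  have hlR : (1:ℝ) ≤ (l:ℝ) := by exact_mod_cast hl1
  have hlnR : (l:ℝ) < (n:ℝ) := by exact_mod_cast hln
  have hEx : eSum x d = ∑ t ∈ front n d, x t := eSum_antitone hxanti (le_of_lt hdn)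
  have hEl : eSum x l = ∑ t ∈ front n l, x t := eSum_antitone hxanti (le_of_lt hln)
  rw [eSum_yvec hyanti hysum hd1 hdn (le_of_lt hln)]
  rcases le_or_gt l d with hld | hld
  · -- case l ≤ d
    have hldR : (l:ℝ) ≤ (d:ℝ) := by exact_mod_cast hld
    have hmin : min l d = l := min_eq_left hld
    have hsub : l - d = 0 := Nat.sub_eq_zero_of_le hld
    rw [hmin, hsub]
    simp only [Nat.cast_zero, zero_mul, add_zero]
    have havg := avg_ineq hxanti (Nat.zero_le l) hld (le_of_lt hdn)
    have hw0 : win n 0 l = front n l := by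
      ext t; simp [win, front]
    rw [hw0] at havg
    have hc1 : ((l - 0 : ℕ) : ℝ) = (l:ℝ) := by norm_num
    have hc2 : ((d - l : ℕ) : ℝ) = (d:ℝ) - (l:ℝ) := by
      rw [Nat.cast_sub hld]
    rw [hc1, hc2] at havg
    have hfs := front_split hld x
    have hkey : (l:ℝ) * eSum x d ≤ (d:ℝ) * eSum x l := by
      rw [hEx, hEl, hfs]
      nlinarith [havg]
    have h1 : (l:ℝ) * eSum y d < (l:ℝ) * eSum x d :=
      mul_lt_mul_of_pos_left hdx (by linarith)
    have hrw : (l:ℝ) * (eSum y d / (d:ℝ)) = ((l:ℝ) * eSum y d) / (d:ℝ) := by ring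
    rw [hrw, div_lt_iff₀ hD]
    calc (l:ℝ) * eSum y d < (l:ℝ) * eSum x d := h1
      _ ≤ (d:ℝ) * eSum x l := hkey
      _ = eSum x l * (d:ℝ) := by ring
  · -- case d < l
    have hdl : d ≤ l := le_of_lt hld
    have hdlR : (d:ℝ) ≤ (l:ℝ) := by exact_mod_cast hdl
    have hmin : min l d = d := min_eq_right hdl
    rw [hmin]
    have hcast : ((l - d : ℕ) : ℝ) = (l:ℝ) - (d:ℝ) := by
      rw [Nat.cast_sub hdl]
    rw [hcast]
    have havg := avg_ineq hxanti hdl (le_of_lt hln) (le_refl n)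
    have hc1 : ((l - d : ℕ) : ℝ) = (l:ℝ) - (d:ℝ) := by rw [Nat.cast_sub hdl]
    have hc2 : ((n - l : ℕ) : ℝ) = (n:ℝ) - (l:ℝ) := by rw [Nat.cast_sub (le_of_lt hln)]
    rw [hc1, hc2, sum_win_last (le_of_lt hln), hxsum] at havg
    have hfs := front_split hdl x
    -- havg : (l-d) * (1 - Σ front l) ≤ (n-l) * Σ win d l,  Σ win d l = Σ front l - Σ front d
    have hwdl : ∑ t ∈ win n d l, x t = eSum x l - eSum x d := by
      rw [hEx, hEl]; linarith [hfs]
    rw [hwdl] at havg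
    -- goal: d * (E/d) + (l-d) * ((1-E)/(n-d)) < eSum x l
    have hE1 : (d:ℝ) * (eSum y d / (d:ℝ)) = eSum y d := by
      field_simp
    rw [hE1]
    have hrw2 : ((l:ℝ) - (d:ℝ)) * ((1 - eSum y d) / ((n:ℝ) - (d:ℝ)))
        = (((l:ℝ) - (d:ℝ)) * (1 - eSum y d)) / ((n:ℝ) - (d:ℝ)) := by ring
    rw [hrw2]
    rw [show eSum y d + ((l:ℝ) - (d:ℝ)) * (1 - eSum y d) / ((n:ℝ) - (d:ℝ)) < eSum x l
        ↔ ((l:ℝ) - (d:ℝ)) * (1 - eSum y d) / ((n:ℝ) - (d:ℝ)) < eSum x l - eSum y d by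
      constructor <;> intro h <;> linarith]
    rw [div_lt_iff₀ hND]
    have hstrict : ((n:ℝ) - (l:ℝ)) * eSum y d < ((n:ℝ) - (l:ℝ)) * eSum x d :=
      mul_lt_mul_of_pos_left hdx (by linarith)
    nlinarith [havg, hstrict]

end Concavity

section Blocks

/-- Every column lies in some block of the decomposition. -/
lemma exists_block {k : ℕ} (α : ℝ) (c : Fin k → ℝ) {b0 : ℕ} (hb : b0 < k) :
    ∃ s e : ℕ, s ≤ b0 ∧ b0 ≤ e ∧ e < k ∧ IsBlock α c s e := by
  classical
  have hk : 0 < k := by omega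
  set cut : ℕ → Prop := fun t => ∃ h : t + 1 < k, c ⟨t + 1, h⟩ / c ⟨t, by omega⟩ ≤ α with hcut
  set P1 : ℕ → Prop := fun t => t = 0 ∨ cut (t - 1) with hP1
  have hP10 : P1 0 := Or.inl rfl
  have hsb : Nat.findGreatest P1 b0 ≤ b0 := Nat.findGreatest_le b0
  have hPs : P1 (Nat.findGreatest P1 b0) := Nat.findGreatest_spec (Nat.zero_le b0) hP10
  set s := Nat.findGreatest P1 b0 with hs
  have hQex : ∃ t : ℕ, (t = k - 1 ∨ cut t) ∧ b0 ≤ t := ⟨k - 1, Or.inl rfl, by omega⟩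
  set e := Nat.find hQex with he
  have hQe := Nat.find_spec hQex
  have heb : b0 ≤ e := hQe.2
  have hek1 : e ≤ k - 1 := Nat.find_min' hQex ⟨Or.inl rfl, by omega⟩
  have hek : e < k := by omega
  have hse : s ≤ e := le_trans hsb heb
  refine ⟨s, e, hsb, heb, hek, hse, hek, ?_, ?_, ?_⟩
  · -- left boundary
    rcases Nat.eq_zero_or_pos s with h0 | hs1
    · exact Or.inl h0
    · right
      rcases hPs with h0 | hcut1
      · omega
      · obtain ⟨h, hle⟩ := hcut1
        have heq : (⟨s - 1 + 1, h⟩ : Fin k) = ⟨s, by omega⟩ := by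
          apply Fin.ext
          show s - 1 + 1 = s
          omega
        rw [heq] at hle
        exact hle
  · -- right boundary
    rcases hQe.1 with h0 | hcut1
    · exact Or.inl h0
    · right
      obtain ⟨h, hle⟩ := hcut1
      exact ⟨h, hle⟩
  · -- interior
    intro t ht1 ht2
    have htk : t + 1 < k := by omega
    have hnotcut : ¬ cut t → α < c ⟨t + 1, by omega⟩ / c ⟨t, by omega⟩ := by
      intro hnc
      by_contra hcon
      push_neg at hcon
      exact hnc ⟨htk, hcon⟩
    rcases le_or_gt b0 t with hbt | hbt
    · -- t ≥ b0 : minimality of e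
      have hmin := Nat.find_min hQex (show t < e from ht2)
      rw [not_and_or] at hmin
      rcases hmin with h1 | h2
      · push_neg at h1
        exact hnotcut h1.2
      · exact absurd hbt h2
    · -- t < b0 : maximality of s
      have hgt : ¬ P1 (t + 1) := Nat.findGreatest_is_greatest
        (show Nat.findGreatest P1 b0 < t + 1 by omega) (show t + 1 ≤ b0 by omega)
      rw [hP1, not_or] at hgt
      obtain ⟨-, hnc⟩ := hgt
      simp only [Nat.add_sub_cancel] at hnc
      exact hnotcut hnc

end Blocks

section Helpers

lemma tensor_apply {n k : ℕ} (z : Fin n → ℝ) (w : Fin k → ℝ) (p : Fin n × Fin k) :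
    tensor z w (finProdFinEquiv p) = z p.1 * w p.2 := by
  simp [tensor, Equiv.symm_apply_apply]

lemma tensor_surj {n k : ℕ} (t : Fin (n * k)) : ∃ p : Fin n × Fin k, t = finProdFinEquiv p :=
  ⟨finProdFinEquiv.symm t, (Equiv.apply_symm_apply _ _).symm⟩

lemma gu_eq {n : ℕ} (hn : 0 < n) (y : Fin n → ℝ) :
    gu y = y ⟨n - 1, Nat.sub_lt hn Nat.one_pos⟩ / y ⟨0, hn⟩ := dif_pos hn

lemma n_pos_of_sum_one {n : ℕ} {y : Fin n → ℝ} (h : ∑ i, y i = 1) : 0 < n := by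
  rcases Nat.eq_zero_or_pos n with h0 | h1
  · subst h0
    simp at h
  · exact h1

lemma seg_anti {k : ℕ} {c : Fin k → ℝ} (hcanti : Antitone c) {i j : ℕ} (hij : i ≤ j)
    (hj : j < k) : Antitone (seg c i j hij hj) := by
  intro t t' h
  refine hcanti ?_
  rw [Fin.le_def]
  simp only [seg]
  have := Fin.le_def.mp h
  omega

lemma seg_pos {k : ℕ} {c : Fin k → ℝ} (hcpos : ∀ b, 0 < c b) {i j : ℕ} (hij : i ≤ j)
    (hj : j < k) : ∀ t, 0 < seg c i j hij hj t := fun t => hcpos _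

lemma antitone_le_top {n : ℕ} (hn : 0 < n) {z : Fin n → ℝ} (hz : Antitone z) (a : Fin n) :
    z a ≤ z ⟨0, hn⟩ := hz (by rw [Fin.le_def]; exact Nat.zero_le _)

lemma antitone_ge_bot {n : ℕ} (hn : 0 < n) {z : Fin n → ℝ} (hz : Antitone z) (a : Fin n) :
    z ⟨n - 1, Nat.sub_lt hn Nat.one_pos⟩ ≤ z a := hz (by
  rw [Fin.le_def]
  simp only []
  have := a.isLt
  omega)

lemma tensor_le_top {n k : ℕ} (hn : 0 < n) (hk : 0 < k) {z : Fin n → ℝ} (hz : Antitone z)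
    (hz0 : ∀ a, 0 ≤ z a) {c : Fin k → ℝ} (hc : Antitone c) (hc0 : ∀ b, 0 ≤ c b)
    (t : Fin (n * k)) : tensor z c t ≤ z ⟨0, hn⟩ * c ⟨0, hk⟩ := by
  obtain ⟨p, rfl⟩ := tensor_surj t
  rw [tensor_apply]
  exact mul_le_mul (antitone_le_top hn hz p.1) (antitone_le_top hk hc p.2) (hc0 _) (hz0 _)

lemma tensor_ge_bot {n k : ℕ} (hn : 0 < n) (hk : 0 < k) {z : Fin n → ℝ} (hz : Antitone z)
    (hz0 : ∀ a, 0 ≤ z a) {c : Fin k → ℝ} (hc : Antitone c) (hc0 : ∀ b, 0 ≤ c b)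
    (t : Fin (n * k)) :
    z ⟨n - 1, Nat.sub_lt hn Nat.one_pos⟩ * c ⟨k - 1, Nat.sub_lt hk Nat.one_pos⟩
      ≤ tensor z c t := by
  obtain ⟨p, rfl⟩ := tensor_surj t
  rw [tensor_apply]
  exact mul_le_mul (antitone_ge_bot hn hz p.1) (antitone_ge_bot hk hc p.2) (hc0 _) (hz0 _)

end Helpers

section Forward

/-- Forward direction : a witness of `T \ S` produces the strict block conditions. -/
lemma forward_dir {n k : ℕ} (hk : 0 < k) (y : Fin n → ℝ)
    (hynn : ∀ i, 0 ≤ y i) (hysum : ∑ i, y i = 1) (hyanti : Antitone y)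
    (hypos : ∀ i, 0 < y i)
    (c : Fin k → ℝ) (hcpos : ∀ i, 0 < c i) (hcanti : Antitone c)
    {x : Fin n → ℝ} (hxnn : ∀ i, 0 ≤ x i) (hxsum : ∑ i, x i = 1) (hxanti : Antitone x)
    (hmajT : Maj (tensor x c) (tensor y c)) (hnmaj : ¬ Maj x y) :
    ∃ (d : ℕ) (_hd1 : 1 < d) (_hd2 : d + 1 < n),
      ∀ (i j : ℕ) (hij : i ≤ j) (hj : j < k), IsBlock (gu y) c i j →
        SMaj (tensor (yvec y d) (seg c i j hij hj))
             (tensor y (seg c i j hij hj)) := by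
  classical
  have hn : 0 < n := n_pos_of_sum_one hysum
  -- extract the violated level d
  have hviol : ∃ d : ℕ, 1 ≤ d ∧ d ≤ n ∧ eSum y d < eSum x d := by
    by_contra hcon
    push_neg at hcon
    exact hnmaj ⟨by rw [hxsum, hysum], fun l h1 h2 => hcon l h1 h2⟩
  obtain ⟨d, hd1, hdn, hdx⟩ := hviol
  -- d ≠ n
  have hdltn : d < n := by
    rcases lt_or_eq_of_le hdn with h | rfl
    · exact h
    · exfalso
      rw [eSum_full, eSum_full, hxsum, hysum] at hdx
      exact lt_irrefl 1 hdx
  -- d ≠ 1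
  have hnk1 : 1 ≤ n * k := Nat.one_le_iff_ne_zero.mpr (by positivity)
  have hd2 : 2 ≤ d := by
    rcases Nat.lt_or_ge d 2 with h | h
    · exfalso
      interval_cases d
      -- d = 1
      have ht := hmajT.2 1 le_rfl hnk1
      have hx1 : eSum (tensor x c) 1 ≥ x ⟨0, hn⟩ * c ⟨0, hk⟩ := by
        have := le_eSum_one (tensor x c) (finProdFinEquiv (⟨0, hn⟩, ⟨0, hk⟩))
        rwa [tensor_apply] at this
      have hy1 : eSum (tensor y c) 1 ≤ y ⟨0, hn⟩ * c ⟨0, hk⟩ :=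
        eSum_one_le _ hnk1 (tensor_le_top hn hk hyanti hynn hcanti (fun b => (hcpos b).le))
      have hxy0 : x ⟨0, hn⟩ ≤ y ⟨0, hn⟩ := by
        have := le_trans hx1 (le_trans ht hy1)
        exact le_of_mul_le_mul_right (by linarith) (hcpos ⟨0, hk⟩)
      have h1 : eSum x 1 ≤ x ⟨0, hn⟩ :=
        eSum_one_le _ hn (antitone_le_top hn hxanti)
      have h2 : y ⟨0, hn⟩ ≤ eSum y 1 := le_eSum_one y ⟨0, hn⟩
      linarith [hdx]
    · exact h
  -- d ≤ n - 2
  have hdn2 : d + 1 < n := by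
    rcases Nat.lt_or_ge (d + 1) n with h | h
    · exact h
    · exfalso
      -- then d = n - 1 (since d < n), show contradiction
      have hdeq : d = n - 1 := by omega
      subst hdeq
      have hn2 : 2 ≤ n := by omega
      have hnk2 : 2 ≤ n * k := le_trans hn2 (Nat.le_mul_of_pos_right n hk)
      have ht := hmajT.2 (n * k - 1) (by omega) (by omega)
      have hxlow : (∑ b, c b) - x ⟨n - 1, Nat.sub_lt hn Nat.one_pos⟩
          * c ⟨k - 1, Nat.sub_lt hk Nat.one_pos⟩ ≤ eSum (tensor x c) (n * k - 1) := by
        have := le_eSum_pred (tensor x c)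
          (finProdFinEquiv (⟨n - 1, Nat.sub_lt hn Nat.one_pos⟩, ⟨k - 1, Nat.sub_lt hk Nat.one_pos⟩))
        rwa [tensor_apply, sum_tensor, hxsum, one_mul] at this
      have hyhigh : eSum (tensor y c) (n * k - 1) ≤ (∑ b, c b)
          - y ⟨n - 1, Nat.sub_lt hn Nat.one_pos⟩ * c ⟨k - 1, Nat.sub_lt hk Nat.one_pos⟩ := by
        have := eSum_pred_le (tensor y c) hnk1
          (tensor_ge_bot hn hk hyanti hynn hcanti (fun b => (hcpos b).le))
        rwa [sum_tensor, hysum, one_mul] at this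
      have hbot : y ⟨n - 1, Nat.sub_lt hn Nat.one_pos⟩ ≤ x ⟨n - 1, Nat.sub_lt hn Nat.one_pos⟩ := by
        have := le_trans hxlow (le_trans ht hyhigh)
        have hc1 := hcpos ⟨k - 1, Nat.sub_lt hk Nat.one_pos⟩
        nlinarith
      -- eSum at n-1 for antitone vectors
      have hwin : ∀ z : Fin n → ℝ, Antitone z →
          eSum z (n - 1) = (∑ i, z i) - z ⟨n - 1, Nat.sub_lt hn Nat.one_pos⟩ := by
        intro z hz
        rw [eSum_antitone hz (by omega)]
        have h1 : (∑ i, z i) = ∑ t ∈ front n (n - 1), z t + ∑ t ∈ win n (n - 1) n, z t := by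
          have := front_split (show n - 1 ≤ n by omega) z
          rw [show front n n = (Finset.univ : Finset (Fin n)) from by
            ext t
            simp only [front, Finset.mem_filter, Finset.mem_univ, true_and, iff_true]
            exact t.isLt] at this
          exact this
        have h2 : win n (n - 1) n = {⟨n - 1, Nat.sub_lt hn Nat.one_pos⟩} := by
          ext t
          simp only [win, Finset.mem_filter, Finset.mem_univ, true_and,
            Finset.mem_singleton, Fin.ext_iff]
          have := t.isLt
          omega
        rw [h1, h2, Finset.sum_singleton]
        ring
      rw [hwin x hxanti, hwin y hyanti, hxsum, hysum] at hdx
      linarith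
  -- main block conditions
  refine ⟨d, by omega, hdn2, ?_⟩
  intro i j hij hj hblk
  obtain ⟨hij', hj', hbdL, hbdR, hint⟩ := hblk
  set m := j - i + 1 with hm
  have hmk : i + m ≤ k := by omega
  set w := seg c i j hij hj with hw
  have hwanti : Antitone w := seg_anti hcanti hij hj
  have hwpos : ∀ b, 0 < w b := seg_pos hcpos hij hj
  have hd0 : 0 < d := by omega
  have hyvsum : ∑ a, yvec y d a = 1 := sum_yvec hd0 hdltn
  constructor
  · rw [sum_tensor, sum_tensor, hyvsum, hysum]
  intro r hr1 hr2
  have hr2' : r + 1 ≤ n * m := by rw [hm]; exact hr2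
  have hrnm : r ≤ n * m - 1 := by omega
  have hrnm' : r ≤ n * m := by omega
  have hnm1 : 1 ≤ n * m := by
    have : 1 ≤ m := by omega
    calc 1 ≤ n := hn
      _ = n * 1 := (mul_one n).symm
      _ ≤ n * m := Nat.mul_le_mul_left n this
  -- Step A : eSum (x ⊗ w) r ≤ eSum (y ⊗ w) r
  have hybot := hypos ⟨n - 1, Nat.sub_lt hn Nat.one_pos⟩
  have hytop := hypos ⟨0, hn⟩
  have hgu : gu y = y ⟨n - 1, Nat.sub_lt hn Nat.one_pos⟩ / y ⟨0, hn⟩ := gu_eq hn y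
  have hsepL : ∀ hi : 0 < i, y ⟨0, hn⟩ * c ⟨i, by omega⟩
      ≤ y ⟨n - 1, by omega⟩ * c ⟨i - 1, by omega⟩ := by
    intro hi
    rcases hbdL with h0 | hle
    · omega
    · have hc1 := hcpos ⟨i - 1, by omega⟩
      rw [hgu, div_le_div_iff₀ hc1 (hypos ⟨0, hn⟩)] at hle
      -- hle : c i * y 0 ≤ y (n-1) * c (i-1)
      calc y ⟨0, hn⟩ * c ⟨i, by omega⟩ = c ⟨i, by omega⟩ * y ⟨0, hn⟩ := by ring
        _ ≤ y ⟨n - 1, by omega⟩ * c ⟨i - 1, by omega⟩ := hle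
  have hsepR : ∀ hj1 : j + 1 < k, y ⟨0, hn⟩ * c ⟨j + 1, by omega⟩
      ≤ y ⟨n - 1, by omega⟩ * c ⟨j, hj⟩ := by
    intro hj1
    rcases hbdR with h0 | ⟨hj1', hle⟩
    · omega
    · have hc1 := hcpos ⟨j, hj⟩
      rw [hgu, div_le_div_iff₀ hc1 (hypos ⟨0, hn⟩)] at hle
      calc y ⟨0, hn⟩ * c ⟨j + 1, by omega⟩ = c ⟨j + 1, hj1'⟩ * y ⟨0, hn⟩ := by ring
        _ ≤ y ⟨n - 1, by omega⟩ * c ⟨j, hj⟩ := hle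
  have hstepA : eSum (tensor x w) r ≤ eSum (tensor y w) r := by
    have hL1 : 1 ≤ n * i + r := by omega
    have hL2 : n * i + r ≤ n * k := by
      calc n * i + r ≤ n * i + n * m := by omega
        _ = n * (i + m) := by ring
        _ ≤ n * k := Nat.mul_le_mul_left n hmk
    have hlow := split_lower x c hij hj (r := r) hrnm'
    have hupp := split_upper hn hyanti hynn hcanti (fun b => (hcpos b).le) hij hj
      hsepL hsepR (r := r) hrnm'
    have hmid := hmajT.2 (n * i + r) hL1 hL2
    rw [hxsum, one_mul] at hlow
    rw [hysum, one_mul] at hupp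
    rw [← hw] at hlow hupp
    linarith
  -- Step B : eSum (yvec ⊗ w) r < eSum (y ⊗ w) r
  rw [eSum_tensor (yvec y d) w r]
  have hcard_univ : r ≤ (Finset.univ : Finset (Fin n × Fin m)).card := by
    rw [Finset.card_univ, Fintype.card_prod, Fintype.card_fin, Fintype.card_fin]
    exact hrnm'
  obtain ⟨S, -, hScard, hSeq⟩ := exists_fSumOn Finset.univ (pairf (yvec y d) w) hcard_univ
  rw [hSeq]
  obtain ⟨l, hl, hlsum, hle⟩ := pair_sum_le (yvec y d) w (fun b => (hwpos b).le) S
  rw [hScard] at hlsum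
  by_cases hcase : ∀ b, l b = 0 ∨ l b = n
  · -- case 2 : r = n * s
    set B1 := Finset.univ.filter (fun b : Fin m => l b = n) with hB1
    set s := B1.card with hs
    have hrns : r = n * s := by
      rw [← hlsum]
      rw [← Finset.sum_filter_add_sum_filter_not Finset.univ (fun b => l b = n) l]
      have h01 : ∑ b ∈ Finset.univ.filter (fun b : Fin m => ¬ l b = n), l b = 0 := by
        refine Finset.sum_eq_zero ?_
        intro b hb
        simp only [Finset.mem_filter] at hb
        rcases hcase b with h | h
        · exact h
        · exact absurd h hb.2
      have h02 : ∑ b ∈ B1, l b = n * s := by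
        rw [hs]
        rw [Finset.sum_congr rfl (fun b hb => ?_), Finset.sum_const, smul_eq_mul, mul_comm]
        exact (Finset.mem_filter.mp hb).2
      rw [h01, h02, add_zero]
    have hs0 : s ≠ 0 := by
      intro h0
      rw [h0, mul_zero] at hrns
      omega
    have hs1 : 1 ≤ s := by omega
    have hsm : s < m := by
      by_contra hcon
      push_neg at hcon
      have : n * m ≤ n * s := Nat.mul_le_mul_left n hcon
      omega
    -- evaluate the mixture
    have heval : ∑ b, w b * eSum (yvec y d) (l b) = ∑ b ∈ B1, w b := by
      rw [← Finset.sum_filter_add_sum_filter_not Finset.univ (fun b => l b = n)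
        (fun b => w b * eSum (yvec y d) (l b))]
      have h01 : ∑ b ∈ Finset.univ.filter (fun b : Fin m => ¬ l b = n),
          w b * eSum (yvec y d) (l b) = 0 := by
        refine Finset.sum_eq_zero ?_
        intro b hb
        simp only [Finset.mem_filter] at hb
        rcases hcase b with h | h
        · rw [h, eSum_zero, mul_zero]
        · exact absurd h hb.2
      have h02 : ∑ b ∈ Finset.univ.filter (fun b : Fin m => l b = n),
          w b * eSum (yvec y d) (l b) = ∑ b ∈ B1, w b := by
        refine Finset.sum_congr rfl ?_
        intro b hb
        rw [(Finset.mem_filter.mp hb).2, eSum_full, hyvsum, mul_one]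
      rw [h01, h02, add_zero]
    have hfrle : ∑ b ∈ B1, w b ≤ ∑ b ∈ front m s, w b :=
      sum_le_sum_front hwanti (hs.symm) (by omega)
    -- the strict swap bound
    have hswap : ∑ b ∈ front m s, w b < eSum (tensor y w) (n * s) := by
      rw [eSum_tensor y w]
      set p1 : Fin n × Fin m := (⟨n - 1, Nat.sub_lt hn Nat.one_pos⟩, ⟨s - 1, by omega⟩) with hp1
      set p2 : Fin n × Fin m := (⟨0, hn⟩, ⟨s, by omega⟩) with hp2
      have hp1mem : p1 ∈ colsLT n m s := by
        simp only [colsLT, Finset.mem_filter, Finset.mem_univ, true_and, hp1]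
        omega
      have hp2notin : p2 ∉ (colsLT n m s).erase p1 := by
        intro hmem
        have := Finset.mem_of_mem_erase hmem
        simp only [colsLT, Finset.mem_filter, Finset.mem_univ, true_and, hp2] at this
        omega
      set Sstar := insert p2 ((colsLT n m s).erase p1) with hSstar
      have hcardstar : Sstar.card = n * s := by
        rw [hSstar, Finset.card_insert_of_notMem hp2notin,
          Finset.card_erase_of_mem hp1mem, card_colsLT (by omega : s ≤ m)]
        have : 1 ≤ n * s := by
          calc 1 ≤ n := hn
            _ = n * 1 := (mul_one n).symm
            _ ≤ n * s := Nat.mul_le_mul_left n hs1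
        omega
      have hsumstar : ∑ p ∈ Sstar, pairf y w p
          = ∑ b ∈ front m s, w b + (pairf y w p2 - pairf y w p1) := by
        rw [hSstar, Finset.sum_insert hp2notin,
          Finset.sum_erase_eq_sub hp1mem, sum_colsLT, hysum, one_mul]
        ring
      have hgain : pairf y w p1 < pairf y w p2 := by
        have hintr := hint (i + s - 1) (by omega) (by omega)
        rw [hgu, div_lt_div_iff₀ (hypos ⟨0, hn⟩) (hcpos ⟨i + s - 1, by omega⟩)] at hintr
        -- hintr : y (n-1) * c (i+s-1+1) ... careful with direction
        have hw1 : w ⟨s - 1, by omega⟩ = c ⟨i + s - 1, by omega⟩ := by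
          rw [hw]
          show c _ = c _
          congr 1
          apply Fin.ext
          show i + (s - 1) = i + s - 1
          omega
        have hw2 : w ⟨s, by omega⟩ = c ⟨i + s - 1 + 1, by omega⟩ := by
          rw [hw]
          show c _ = c _
          congr 1
          apply Fin.ext
          show i + s = i + s - 1 + 1
          omega
        simp only [pairf, hp1, hp2]
        rw [hw1, hw2]
        calc y ⟨n - 1, Nat.sub_lt hn Nat.one_pos⟩ * c ⟨i + s - 1, by omega⟩
            < y ⟨0, hn⟩ * c ⟨i + s - 1 + 1, by omega⟩ := by linarith [hintr]
          _ = y ⟨0, hn⟩ * c ⟨i + s - 1 + 1, by omega⟩ := rfl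
      have hstarle : ∑ p ∈ Sstar, pairf y w p ≤ fSumOn Finset.univ (pairf y w) (n * s) :=
        sum_le_fSumOn (pairf y w) (Finset.subset_univ _) hcardstar
      calc ∑ b ∈ front m s, w b < ∑ p ∈ Sstar, pairf y w p := by
            rw [hsumstar]; linarith [hgain]
        _ ≤ fSumOn Finset.univ (pairf y w) (n * s) := hstarle
    calc ∑ p ∈ S, pairf (yvec y d) w p ≤ ∑ b, w b * eSum (yvec y d) (l b) := hle
      _ = ∑ b ∈ B1, w b := heval
      _ ≤ ∑ b ∈ front m s, w b := hfrle
      _ < eSum (tensor y w) (n * s) := hswap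
      _ = eSum (tensor y w) r := by rw [hrns]
  · -- case 1 : some intermediate l b
    push_neg at hcase
    obtain ⟨b0, hb0⟩ := hcase
    have hb01 : 1 ≤ l b0 := by omega
    have hb0n : l b0 < n := by
      rcases lt_or_eq_of_le (hl b0) with h | h
      · exact h
      · exact absurd h hb0.2
    have hweak : ∀ b, eSum (yvec y d) (l b) ≤ eSum x (l b) := by
      intro b
      rcases Nat.eq_zero_or_pos (l b) with h0 | hpos
      · rw [h0, eSum_zero, eSum_zero]
      · rcases lt_or_eq_of_le (hl b) with hlt | heq
        · exact le_of_lt (eSum_yvec_lt hyanti hysum hd0 hdltn hxanti hxsum hdx hpos hlt)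
        · rw [heq, eSum_full, eSum_full, hyvsum, hxsum]
    have hstrictb0 : eSum (yvec y d) (l b0) < eSum x (l b0) :=
      eSum_yvec_lt hyanti hysum hd0 hdltn hxanti hxsum hdx hb01 hb0n
    have hmix : ∑ b, w b * eSum (yvec y d) (l b) < ∑ b, w b * eSum x (l b) := by
      refine Finset.sum_lt_sum (fun b _ => mul_le_mul_of_nonneg_left (hweak b) (hwpos b).le)
        ⟨b0, Finset.mem_univ b0, ?_⟩
      exact mul_lt_mul_of_pos_left hstrictb0 (hwpos b0)
    have hxge : ∑ b, w b * eSum x (l b) ≤ eSum (tensor x w) r := by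
      rw [eSum_tensor x w, ← hlsum]
      exact pair_sum_ge x w (fun b => (hwpos b).le) l hl
    calc ∑ p ∈ S, pairf (yvec y d) w p ≤ ∑ b, w b * eSum (yvec y d) (l b) := hle
      _ < ∑ b, w b * eSum x (l b) := hmix
      _ ≤ eSum (tensor x w) r := hxge
      _ ≤ eSum (tensor y w) r := hstepA

end Forward

section Backward

lemma all_eq_of_sum_eq_card_mul {n : ℕ} {T : Finset (Fin n)} {z : Fin n → ℝ} {a : ℝ}
    (hub : ∀ t ∈ T, z t ≤ a) (hsum : ∑ t ∈ T, z t = T.card * a) : ∀ t ∈ T, z t = a := by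
  by_contra hcon
  push_neg at hcon
  obtain ⟨t0, ht0, hne⟩ := hcon
  have hlt : z t0 < a := lt_of_le_of_ne (hub t0 ht0) hne
  have : ∑ t ∈ T, z t < ∑ t ∈ T, a :=
    Finset.sum_lt_sum hub ⟨t0, ht0, hlt⟩
  rw [Finset.sum_const, nsmul_eq_mul] at this
  linarith [hsum]

set_option maxHeartbeats 2000000 in
/-- Backward direction : the strict block conditions produce a witness in `T \ S`. -/
lemma backward_dir {n k : ℕ} (hk : 0 < k) (y : Fin n → ℝ)
    (hynn : ∀ i, 0 ≤ y i) (hysum : ∑ i, y i = 1) (hyanti : Antitone y)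
    (hypos : ∀ i, 0 < y i)
    (c : Fin k → ℝ) (hcpos : ∀ i, 0 < c i) (hcanti : Antitone c)
    {d : ℕ} (hd1 : 1 < d) (hd2 : d + 1 < n)
    (H : ∀ (i j : ℕ) (hij : i ≤ j) (hj : j < k), IsBlock (gu y) c i j →
      SMaj (tensor (yvec y d) (seg c i j hij hj)) (tensor y (seg c i j hij hj))) :
    Sset y ⊂ Tcat y c := by
  classical
  have hn : 0 < n := by omega
  have hd0 : 0 < d := by omega
  have hdn : d < n := by omega
  set E := eSum y d with hE
  have hE0 : 0 < E := eSum_y_pos hypos hyanti hd0 (le_of_lt hdn)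
  have hE1 : E < 1 := eSum_y_lt_one hypos hyanti hysum hdn
  have hDpos : (0:ℝ) < (d:ℝ) := by exact_mod_cast hd0
  have hdnR : (d:ℝ) < (n:ℝ) := by exact_mod_cast hdn
  have hNDpos : (0:ℝ) < (n:ℝ) - (d:ℝ) := by linarith
  set u := E / (d:ℝ) with hu
  set v := (1 - E) / ((n:ℝ) - (d:ℝ)) with hv
  have hu0 : 0 < u := by positivity
  have hv0 : 0 < v := by
    rw [hv]
    have : 0 < 1 - E := by linarith
    positivity
  have hvu : v ≤ u := v_le_u hyanti hysum hd0 hdn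
  set ytop := y ⟨0, hn⟩ with hytop
  set ybot := y ⟨n - 1, Nat.sub_lt hn Nat.one_pos⟩ with hybot
  have hytop0 : 0 < ytop := hypos _
  have hybot0 : 0 < ybot := hypos _
  set α := gu y with hα
  have hαeq : α = ybot / ytop := gu_eq hn y
  have hα0 : 0 < α := by rw [hαeq]; positivity
  have hαle1 : α ≤ 1 := by
    rw [hαeq, div_le_one hytop0]
    exact antitone_le_top hn hyanti _
  -- u ≤ ytop, ybot ≤ v
  have hEfront : E = ∑ t ∈ front n d, y t := eSum_antitone hyanti (le_of_lt hdn)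
  have huy : u ≤ ytop := by
    rw [hu, div_le_iff₀ hDpos, hEfront]
    have : ∑ t ∈ front n d, y t ≤ ∑ t ∈ front n d, ytop :=
      Finset.sum_le_sum (fun t _ => antitone_le_top hn hyanti t)
    rw [Finset.sum_const, nsmul_eq_mul, card_front (le_of_lt hdn)] at this
    linarith
  have hby : ybot ≤ v := by
    rw [hv, le_div_iff₀ hNDpos]
    have hwin : 1 - E = ∑ t ∈ win n d n, y t := by
      rw [sum_win_last (le_of_lt hdn) y, hysum, hEfront]
    have : ∑ t ∈ win n d n, ybot ≤ ∑ t ∈ win n d n, y t :=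
      Finset.sum_le_sum (fun t _ => antitone_ge_bot hn hyanti t)
    rw [Finset.sum_const, nsmul_eq_mul, card_win (le_of_lt hdn) le_rfl] at this
    rw [hwin]
    have hcast : ((n - d : ℕ) : ℝ) = (n:ℝ) - (d:ℝ) := Nat.cast_sub (le_of_lt hdn)
    rw [hcast] at this
    linarith
  -- strict margin : α * u < v  (else y = yvec y d, contradicting strictness)
  have hM : α * u < v := by
    rcases lt_or_ge (α * u) v with h | h
    · exact h
    · exfalso
      -- then v = ybot and u = ytop
      have hαu : α * u ≤ ybot := by
        rw [hαeq]
        calc ybot / ytop * u ≤ ybot / ytop * ytop := by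
              refine mul_le_mul_of_nonneg_left huy ?_
              positivity
          _ = ybot := by field_simp
      have hveq : v = ybot := le_antisymm (by linarith) hby
      have hueq : u = ytop := by
        have h1 : α * u = ybot := le_antisymm hαu (by linarith [hveq])
        rw [hαeq] at h1
        have : ybot / ytop * u = ybot / ytop * ytop := by
          rw [h1]; field_simp
        have hne : ybot / ytop ≠ 0 := by positivity
        exact mul_left_cancel₀ hne this
      -- all top components equal ytop, all bottom equal ybot
      have htops : ∀ t ∈ front n d, y t = ytop := by
        refine all_eq_of_sum_eq_card_mul (fun t _ => antitone_le_top hn hyanti t) ?_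
        rw [card_front (le_of_lt hdn), ← hEfront]
        have : E = (d:ℝ) * ytop := by
          rw [← hueq, hu]; field_simp
        linarith
      have hbots : ∀ t ∈ win n d n, y t = ybot := by
        have hneg : ∀ t ∈ win n d n, -y t ≤ -ybot :=
          fun t _ => neg_le_neg (antitone_ge_bot hn hyanti t)
        have hseq : ∑ t ∈ win n d n, (fun t => -y t) t = ((win n d n).card : ℝ) * (-ybot) := by
          rw [card_win (le_of_lt hdn) le_rfl]
          have hwin : ∑ t ∈ win n d n, y t = 1 - E := by
            rw [sum_win_last (le_of_lt hdn) y, hysum, hEfront]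
          have hcast : ((n - d : ℕ) : ℝ) = (n:ℝ) - (d:ℝ) := Nat.cast_sub (le_of_lt hdn)
          rw [Finset.sum_neg_distrib, hwin, hcast]
          have : 1 - E = ((n:ℝ) - (d:ℝ)) * ybot := by
            rw [← hveq, hv]; field_simp
          linarith
        intro t ht
        have := all_eq_of_sum_eq_card_mul hneg hseq t ht
        linarith [this]
      have hyeq : y = yvec y d := by
        funext a
        rw [yvec_apply]
        split
        · next ha =>
            rw [← hE, ← hu]
            rw [htops a (by simp [front]; exact ha), hueq]
        · next ha =>
            rw [← hE, ← hv]
            rw [hbots a (by simp [win]; omega), hveq]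
      -- contradiction with strictness on some block
      obtain ⟨s, e, -, -, hek, hblk⟩ := exists_block α c (show 0 < k from hk)
      have hsm := H s e (by
        obtain ⟨h1, -⟩ := hblk
        exact h1) hek hblk
      have hstrict := hsm.2 1 le_rfl (by
        have h1 : 1 ≤ e - s + 1 := by omega
        calc 1 + 1 ≤ n := by omega
          _ = n * 1 := (mul_one n).symm
          _ ≤ n * (e - s + 1) := Nat.mul_le_mul_left n h1)
      rw [← hyeq] at hstrict
      exact lt_irrefl _ hstrict
  -- threshold function over candidate blocks
  set G : ℕ × ℕ × ℕ → ℝ := fun t =>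
    if h : t.1 ≤ t.2.1 ∧ t.2.1 < k ∧ IsBlock α c t.1 t.2.1 ∧ 1 ≤ t.2.2 ∧
        t.2.2 + 1 ≤ n * (t.2.1 - t.1 + 1) then
      (eSum (tensor y (seg c t.1 t.2.1 h.1 h.2.1)) t.2.2
        - eSum (tensor (yvec y d) (seg c t.1 t.2.1 h.1 h.2.1)) t.2.2)
        / ((n : ℝ) * (∑ b, seg c t.1 t.2.1 h.1 h.2.1 b) + 1)
    else 1 with hG
  have hGpos : ∀ t, 0 < G t := by
    intro t
    rw [hG]
    dsimp only
    split
    · next h =>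
        have hgap := (H t.1 t.2.1 h.1 h.2.1 h.2.2.1).2 t.2.2 h.2.2.2.1 h.2.2.2.2
        have hsegpos : 0 < ∑ b, seg c t.1 t.2.1 h.1 h.2.1 b :=
          Finset.sum_pos (fun b _ => hcpos _) ⟨⟨0, by omega⟩, Finset.mem_univ _⟩
        have hden : (0:ℝ) < (n : ℝ) * (∑ b, seg c t.1 t.2.1 h.1 h.2.1 b) + 1 := by
          have : (0:ℝ) ≤ (n:ℝ) := Nat.cast_nonneg n
          nlinarith
        have : 0 < eSum (tensor y (seg c t.1 t.2.1 h.1 h.2.1)) t.2.2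
            - eSum (tensor (yvec y d) (seg c t.1 t.2.1 h.1 h.2.1)) t.2.2 := by linarith
        positivity
    · exact one_pos
  set F : Finset ℝ := insert (v / 2) (insert ((v - α * u) / (1 + α))
    ((Finset.range k ×ˢ Finset.range k ×ˢ Finset.range (n * k)).image G)) with hF
  have hFne : F.Nonempty := ⟨v / 2, by simp [hF]⟩
  set δ := F.min' hFne with hδ
  have hFpos : ∀ z ∈ F, 0 < z := by
    intro z hz
    rw [hF] at hz
    simp only [Finset.mem_insert, Finset.mem_image] at hz
    rcases hz with rfl | rfl | ⟨t, -, rfl⟩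
    · positivity
    · have h1 : 0 < 1 + α := by linarith
      have h2 : 0 < v - α * u := by linarith
      positivity
    · exact hGpos t
  have hδpos : 0 < δ := hFpos _ (Finset.min'_mem F hFne)
  have hδv : δ ≤ v / 2 := Finset.min'_le F _ (by simp [hF])
  have hδM : δ ≤ (v - α * u) / (1 + α) := Finset.min'_le F _ (by simp [hF])
  have hδsep : α * (u + δ) ≤ v - δ := by
    rw [le_div_iff₀ (by linarith : (0:ℝ) < 1 + α)] at hδM
    nlinarith
  have hδblock : ∀ (i j r : ℕ) (hij : i ≤ j) (hjk : j < k), IsBlock α c i j → 1 ≤ r →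
      r + 1 ≤ n * (j - i + 1) →
      δ * ((n:ℝ) * (∑ b, seg c i j hij hjk b) + 1)
        ≤ eSum (tensor y (seg c i j hij hjk)) r
          - eSum (tensor (yvec y d) (seg c i j hij hjk)) r := by
    intro i j r hij hjk hblk hr1 hr2
    have hjik : j - i + 1 ≤ k := by omega
    have hmem : G (i, j, r) ∈ F := by
      rw [hF]
      refine Finset.mem_insert_of_mem (Finset.mem_insert_of_mem ?_)
      refine Finset.mem_image.mpr ⟨(i, j, r), ?_, rfl⟩
      simp only [Finset.mem_product, Finset.mem_range]
      refine ⟨by omega, by omega, ?_⟩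
      calc r < r + 1 := Nat.lt_succ_self r
        _ ≤ n * (j - i + 1) := hr2
        _ ≤ n * k := Nat.mul_le_mul_left n hjik
    have hle := Finset.min'_le F _ hmem
    have hGval : G (i, j, r) = (eSum (tensor y (seg c i j hij hjk)) r
        - eSum (tensor (yvec y d) (seg c i j hij hjk)) r)
        / ((n : ℝ) * (∑ b, seg c i j hij hjk b) + 1) := by
      rw [hG]
      dsimp only
      rw [dif_pos ⟨hij, hjk, hblk, hr1, hr2⟩]
    have hle2 : δ ≤ (eSum (tensor y (seg c i j hij hjk)) r
        - eSum (tensor (yvec y d) (seg c i j hij hjk)) r)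
        / ((n : ℝ) * (∑ b, seg c i j hij hjk b) + 1) := by
      rw [← hGval]
      exact hle
    have hsegpos : 0 < ∑ b, seg c i j hij hjk b :=
      Finset.sum_pos (fun b _ => hcpos _) ⟨⟨0, by omega⟩, Finset.mem_univ _⟩
    have hden : (0:ℝ) < (n : ℝ) * (∑ b, seg c i j hij hjk b) + 1 := by
      have : (0:ℝ) ≤ (n:ℝ) := Nat.cast_nonneg n
      nlinarith
    exact (le_div_iff₀ hden).mp hle2
  -- the witness vector
  set p0 : Fin n := ⟨0, hn⟩ with hp0
  set pl : Fin n := ⟨n - 1, Nat.sub_lt hn Nat.one_pos⟩ with hpl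
  have hp0pl : p0 ≠ pl := by
    rw [hp0, hpl, Fin.ne_iff_vne]
    show 0 ≠ n - 1
    omega
  set xd : Fin n → ℝ := fun a =>
    yvec y d a + (if a = p0 then δ else 0) - (if a = pl then δ else 0) with hxd
  have hyvec_u : ∀ a, yvec y d a ≤ u := by
    intro a
    rw [yvec_apply]
    split
    · exact le_refl u
    · exact hvu
  have hyvec_v : ∀ a, v ≤ yvec y d a := by
    intro a
    rw [yvec_apply]
    split
    · exact hvu
    · exact le_refl v
  have hxd0 : xd p0 = yvec y d p0 + δ := by
    rw [hxd]
    simp [hp0pl]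
  have hxd0' : yvec y d p0 = u := by
    rw [yvec_apply, if_pos]
    show (0:ℕ) < d
    omega
  have hxdl : xd pl = yvec y d pl - δ := by
    rw [hxd]
    simp [Ne.symm hp0pl]
  have hxdl' : yvec y d pl = v := by
    rw [yvec_apply, if_neg]
    show ¬ ((n-1 : ℕ) < d)
    omega
  have hxdmid : ∀ a, a ≠ p0 → a ≠ pl → xd a = yvec y d a := by
    intro a h0 hl
    rw [hxd]
    simp [h0, hl]
  have hxd_le : ∀ a, xd a ≤ yvec y d a + δ := by
    intro a
    rw [hxd]
    have h1 : (if a = p0 then δ else 0) ≤ δ := by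
      split <;> [exact le_refl δ; exact hδpos.le]
    have h2 : (0:ℝ) ≤ (if a = pl then δ else 0) := by
      split <;> [exact hδpos.le; exact le_refl 0]
    dsimp only
    linarith
  have hxdsum : ∑ a, xd a = 1 := by
    rw [hxd]
    dsimp only
    rw [Finset.sum_sub_distrib, Finset.sum_add_distrib,
      Finset.sum_ite_eq' Finset.univ p0 (fun _ => δ),
      Finset.sum_ite_eq' Finset.univ pl (fun _ => δ)]
    simp only [Finset.mem_univ, if_true]
    rw [sum_yvec hd0 hdn]
    ring
  have hxdnn : ∀ a, 0 ≤ xd a := by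
    intro a
    by_cases h0 : a = p0
    · rw [h0, hxd0, hxd0']
      linarith
    · by_cases hl : a = pl
      · rw [hl, hxdl, hxdl']
        linarith
      · rw [hxdmid a h0 hl]
        exact yvec_nonneg hypos hyanti hysum hd0 hdn a
  have hxub : ∀ a, xd a ≤ u + δ := by
    intro a
    by_cases h0 : a = p0
    · rw [h0, hxd0, hxd0']
    · by_cases hl : a = pl
      · rw [hl, hxdl, hxdl']
        linarith
      · rw [hxdmid a h0 hl]
        linarith [hyvec_u a]
  have hxlb : ∀ a, v - δ ≤ xd a := by
    intro a
    by_cases h0 : a = p0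
    · rw [h0, hxd0, hxd0']
      linarith
    · by_cases hl : a = pl
      · rw [hl, hxdl, hxdl']
      · rw [hxdmid a h0 hl]
        linarith [hyvec_v a]
  have hxdanti : Antitone xd := by
    intro a b hab
    by_cases hb0 : b = p0
    · have : a = p0 := by
        have h1 : (a : ℕ) ≤ (b : ℕ) := Fin.le_def.mp hab
        have h2 : (b : ℕ) = 0 := by rw [hb0]
        apply Fin.ext
        show (a : ℕ) = (p0 : ℕ)
        show (a : ℕ) = 0
        omega
      rw [this, hb0]
    · by_cases ha0 : a = p0
      · rw [ha0, hxd0, hxd0']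
        calc xd b ≤ u + δ := hxub b
          _ = yvec y d p0 + δ := by rw [hxd0']
          _ = u + δ := by rw [hxd0']
      · by_cases hal : a = pl
        · have : b = pl := by
            have h1 : (a : ℕ) ≤ (b : ℕ) := Fin.le_def.mp hab
            have h2 : (a : ℕ) = n - 1 := by rw [hal]
            have h3 := b.isLt
            apply Fin.ext
            show (b : ℕ) = (pl : ℕ)
            show (b : ℕ) = n - 1
            omega
          rw [this, hal]
        · by_cases hbl : b = pl
          · rw [hbl, hxdl, hxdl', hxdmid a ha0 hal]
            linarith [hyvec_v a]
          · rw [hxdmid a ha0 hal, hxdmid b hb0 hbl]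
            exact yvec_antitone hyanti hysum hd0 hdn hab
  have hxdVn : xd ∈ Vn n := ⟨hxdnn, hxdsum, hxdanti⟩
  -- xd is not in Sset
  have hnotS : xd ∉ Sset y := by
    intro hmem
    obtain ⟨-, hmaj⟩ := hmem
    have hled := hmaj.2 d (by omega) (le_of_lt hdn)
    -- compute eSum xd d
    have hp0front : p0 ∈ front n d := by
      simp only [front, Finset.mem_filter, Finset.mem_univ, true_and, hp0]
      omega
    have hplfront : pl ∉ front n d := by
      simp only [front, Finset.mem_filter, Finset.mem_univ, true_and, hpl]
      omega
    have hcomp : eSum xd d = E + δ := by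
      rw [eSum_antitone hxdanti (le_of_lt hdn), hxd]
      dsimp only
      rw [Finset.sum_sub_distrib, Finset.sum_add_distrib,
        Finset.sum_ite_eq' (front n d) p0 (fun _ => δ),
        Finset.sum_ite_eq' (front n d) pl (fun _ => δ),
        if_pos hp0front, if_neg hplfront]
      have hyv : ∑ a ∈ front n d, yvec y d a = E := by
        rw [← eSum_antitone (yvec_antitone hyanti hysum hd0 hdn) (le_of_lt hdn),
          eSum_yvec hyanti hysum hd0 hdn (le_of_lt hdn)]
        simp only [min_self, Nat.sub_self, Nat.cast_zero, zero_mul, add_zero]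
        rw [← hE]
        field_simp
      rw [hyv]
      ring
    rw [hcomp, ← hE] at hled
    linarith
  -- xd is in Tcat
  have hinT : Maj (tensor xd c) (tensor y c) := by
    constructor
    · rw [sum_tensor, sum_tensor, hxdsum, hysum]
    intro L hL1 hLnk
    set b0 := (L - 1) / n with hb0
    have hqr := Nat.div_add_mod (L - 1) n
    rw [← hb0] at hqr
    have hrem : (L - 1) % n < n := Nat.mod_lt _ hn
    have hb0k : b0 < k := by
      by_contra hcon
      push_neg at hcon
      have h1 : n * k ≤ n * b0 := Nat.mul_le_mul_left n hcon
      omega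
    obtain ⟨s, e, hsb0, hb0e, hek, hblk⟩ := exists_block α c hb0k
    obtain ⟨hse, hek', hbdL, hbdR, hint⟩ := id hblk
    set m := e - s + 1 with hm
    have hns : n * s ≤ n * b0 := Nat.mul_le_mul_left n hsb0
    have hne1 : n * (b0 + 1) ≤ n * (e + 1) := Nat.mul_le_mul_left n (by omega)
    have heq1 : n * (b0 + 1) = n * b0 + n := by ring
    have heq2 : n * (e + 1) = n * s + n * m := by
      rw [show e + 1 = s + m by omega, Nat.mul_add]
    have hLlow : n * s < L := by omega
    have hLhigh : L ≤ n * s + n * m := by omega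
    set r := L - n * s with hr
    have hr1 : 1 ≤ r := by omega
    have hrle : r ≤ n * m := by omega
    have hLr : L = n * s + r := by omega
    have hrm' : r ≤ n * (e - s + 1) := by rw [← hm]; exact hrle
    -- separations for xd
    have hx0v : xd ⟨0, hn⟩ = u + δ := by
      rw [show (⟨0, hn⟩ : Fin n) = p0 from rfl, hxd0, hxd0']
    have hxlv : xd ⟨n - 1, Nat.sub_lt hn Nat.one_pos⟩ = v - δ := by
      rw [show (⟨n - 1, Nat.sub_lt hn Nat.one_pos⟩ : Fin n) = pl from rfl, hxdl, hxdl']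
    have hsepLx : ∀ hi : 0 < s, xd ⟨0, hn⟩ * c ⟨s, by omega⟩
        ≤ xd ⟨n - 1, by omega⟩ * c ⟨s - 1, by omega⟩ := by
      intro hi
      rcases hbdL with h0 | hle
      · omega
      · have hc1 : 0 < c ⟨s - 1, by omega⟩ := hcpos _
        have hcs : c ⟨s, by omega⟩ ≤ α * c ⟨s - 1, by omega⟩ := by
          rw [div_le_iff₀ hc1] at hle
          linarith [hle]
        rw [hx0v, hxlv]
        calc (u + δ) * c ⟨s, by omega⟩ ≤ (u + δ) * (α * c ⟨s - 1, by omega⟩) := by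
              refine mul_le_mul_of_nonneg_left hcs ?_
              linarith
          _ = (α * (u + δ)) * c ⟨s - 1, by omega⟩ := by ring
          _ ≤ (v - δ) * c ⟨s - 1, by omega⟩ := mul_le_mul_of_nonneg_right hδsep hc1.le
    have hsepRx : ∀ hj1 : e + 1 < k, xd ⟨0, hn⟩ * c ⟨e + 1, hj1⟩
        ≤ xd ⟨n - 1, by omega⟩ * c ⟨e, hek⟩ := by
      intro hj1
      rcases hbdR with h0 | ⟨hj1', hle⟩
      · omega
      · have hc1 : 0 < c ⟨e, hek⟩ := hcpos _
        have hcs : c ⟨e + 1, hj1⟩ ≤ α * c ⟨e, hek⟩ := by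
          rw [div_le_iff₀ hc1] at hle
          linarith [hle]
        rw [hx0v, hxlv]
        calc (u + δ) * c ⟨e + 1, hj1⟩ ≤ (u + δ) * (α * c ⟨e, hek⟩) := by
              refine mul_le_mul_of_nonneg_left hcs ?_
              linarith
          _ = (α * (u + δ)) * c ⟨e, hek⟩ := by ring
          _ ≤ (v - δ) * c ⟨e, hek⟩ := mul_le_mul_of_nonneg_right hδsep hc1.le
    have hupper := split_upper hn hxdanti hxdnn hcanti (fun b => (hcpos b).le) hse hek
      hsepLx hsepRx (r := r) hrm'
    have hlower := split_lower y c hse hek (r := r) hrm'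
    rw [hxdsum, one_mul] at hupper
    rw [hysum, one_mul] at hlower
    set w := seg c s e hse hek with hw
    have hmidle : eSum (tensor xd w) r ≤ eSum (tensor y w) r := by
      rcases eq_or_lt_of_le hrle with heq | hlt
      · -- r = n * m : both sides are the full sum
        rw [hm] at heq
        have h1 : eSum (tensor xd w) (n * (e - s + 1)) = ∑ b, w b := by
          rw [eSum_full, sum_tensor, hxdsum, one_mul]
        have h2 : eSum (tensor y w) (n * (e - s + 1)) = ∑ b, w b := by
          rw [eSum_full, sum_tensor, hysum, one_mul]
        rw [heq, h1, h2]
      · -- r < n * m : use the strict gap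
        have hrm2 : r + 1 ≤ n * (e - s + 1) := by
          rw [← hm]
          omega
        have hgap := hδblock s e r hse hek hblk hr1 hrm2
        rw [← hw] at hgap
        have hwpos : ∀ b, 0 < w b := seg_pos hcpos hse hek
        have hxle : eSum (tensor xd w) r
            ≤ eSum (tensor (yvec y d) w) r + δ * ((n:ℝ) * ∑ b, w b) := by
          rw [eSum_tensor xd w]
          have hrcard : r ≤ (Finset.univ : Finset (Fin n × Fin (e - s + 1))).card := by
            rw [Finset.card_univ, Fintype.card_prod, Fintype.card_fin, Fintype.card_fin, ← hm]
            exact hrle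
          refine fSumOn_le (pairf xd w) hrcard ?_
          intro S _ hcard
          have hpoint : ∀ p : Fin n × Fin (e - s + 1),
              pairf xd w p ≤ pairf (yvec y d) w p + δ * w p.2 := by
            intro p
            have h1 : xd p.1 ≤ yvec y d p.1 + δ := hxd_le p.1
            have h2 : 0 ≤ w p.2 := (hwpos p.2).le
            calc pairf xd w p = xd p.1 * w p.2 := rfl
              _ ≤ (yvec y d p.1 + δ) * w p.2 := mul_le_mul_of_nonneg_right h1 h2
              _ = pairf (yvec y d) w p + δ * w p.2 := by
                  simp only [pairf]
                  ring
          have hsumw : ∑ p : Fin n × Fin (e - s + 1), w p.2 = (n:ℝ) * ∑ b, w b := by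
            have h1 : ∑ p : Fin n × Fin (e - s + 1), w p.2
                = ∑ _a : Fin n, ∑ b : Fin (e - s + 1), w b := by
              rw [Fintype.sum_prod_type]
            rw [h1, Finset.sum_const, nsmul_eq_mul, Finset.card_univ, Fintype.card_fin]
          calc ∑ p ∈ S, pairf xd w p
              ≤ ∑ p ∈ S, (pairf (yvec y d) w p + δ * w p.2) :=
                Finset.sum_le_sum (fun p _ => hpoint p)
            _ = ∑ p ∈ S, pairf (yvec y d) w p + δ * ∑ p ∈ S, w p.2 := by
                rw [Finset.sum_add_distrib, Finset.mul_sum]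
            _ ≤ eSum (tensor (yvec y d) w) r + δ * ((n:ℝ) * ∑ b, w b) := by
                have ha : ∑ p ∈ S, pairf (yvec y d) w p ≤ eSum (tensor (yvec y d) w) r := by
                  rw [eSum_tensor (yvec y d) w]
                  exact sum_le_fSumOn _ (Finset.subset_univ S) hcard
                have hb : ∑ p ∈ S, w p.2 ≤ (n:ℝ) * ∑ b, w b := by
                  rw [← hsumw]
                  exact Finset.sum_le_sum_of_subset_of_nonneg (Finset.subset_univ S)
                    (fun p _ _ => (hwpos p.2).le)
                have hc : δ * ∑ p ∈ S, w p.2 ≤ δ * ((n:ℝ) * ∑ b, w b) :=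
                  mul_le_mul_of_nonneg_left hb hδpos.le
                linarith
        have hfree : δ * ((n:ℝ) * ∑ b, w b) ≤ δ * ((n:ℝ) * ∑ b, w b + 1) := by
          nlinarith [hδpos]
        linarith
    calc eSum (tensor xd c) L = eSum (tensor xd c) (n * s + r) := by rw [← hLr]
      _ ≤ (∑ b ∈ front k s, c b) + eSum (tensor xd w) r := hupper
      _ ≤ (∑ b ∈ front k s, c b) + eSum (tensor y w) r := by linarith
      _ ≤ eSum (tensor y c) (n * s + r) := hlower
      _ = eSum (tensor y c) L := by rw [← hLr]
  rw [Set.ssubset_def]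
  constructor
  · intro z hz
    obtain ⟨hzV, hzmaj⟩ := hz
    exact ⟨hzV, maj_tensor hzmaj c (fun b => (hcpos b).le)⟩
  · intro hcon
    exact hnotS (hcon ⟨hxdVn, hinT⟩)

end Backward
/-- Theorem 11 of the paper. `S(y) ⊊ T(y,c)` iff there is
`1 < d < n-1` with `y(d) ⊗ c' ◁ y ⊗ c'` for every block `c'` of the
decomposition `[c]_{g_u(y)}`. -/
theorem stmt15 {n k : ℕ} (hk : 0 < k)
    (y : Fin n → ℝ) (hy : y ∈ Vn n) (hypos : ∀ i, 0 < y i)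
    (c : Fin k → ℝ) (hcpos : ∀ i, 0 < c i) (hcanti : Antitone c) :
    Sset y ⊂ Tcat y c ↔
      ∃ (d : ℕ) (hd1 : 1 < d) (hd2 : d + 1 < n),
        ∀ (i j : ℕ) (hij : i ≤ j) (hj : j < k), IsBlock (gu y) c i j →
          SMaj (tensor (yvec y d) (seg c i j hij hj))
               (tensor y (seg c i j hij hj)) := by
  obtain ⟨hynn, hysum, hyanti⟩ := hy
  constructor
  · intro hss
    obtain ⟨x, hxT, hxnS⟩ := Set.exists_of_ssubset hss
    obtain ⟨hxV, hmajT⟩ := hxT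
    obtain ⟨hxnn, hxsum, hxanti⟩ := hxV
    have hnmaj : ¬ Maj x y := fun hm => hxnS ⟨⟨hxnn, hxsum, hxanti⟩, hm⟩
    exact forward_dir hk y hynn hysum hyanti hypos c hcpos hcanti hxnn hxsum hxanti hmajT hnmaj
  · rintro ⟨d, hd1, hd2, H⟩
    exact backward_dir hk y hynn hysum hyanti hypos c hcpos hcanti hd1 hd2 H

end
end
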